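/- arXiv:1106.0642 — 5 statements merged into one kernel-verified Lean document; each statement's English description precedes it below -/
import Mathlib

section
/- Every finite tree T with at least two vertices contains a maximally extended peripheral path; that is, there exist two leaves u and v of T such that for the unique u–v path P in T, the graph obtained from T by deleting the edges of P is, after discarding isolated vertices, again a tree (connected or empty). -/
open SimpleGraph

namespace PeriphAux

variable {V : Type*} {G : SimpleGraph V}

lemma append_isPath {a b c : V} {p : G.Walk a b} {q : G.Walk b c}
    (hp : p.IsPath) (hq : q.IsPath)
    (h : ∀ x, x ∈ p.support → x ∈ q.support → x = b) : (p.append q).IsPath := by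
  rw [Walk.isPath_def, Walk.support_append]
  have hqn := hq.support_nodup
  rw [q.support_eq_cons] at hqn
  refine List.Nodup.append hp.support_nodup hqn.of_cons ?_
  intro x hxp hxq
  refine absurd ?_ ((List.nodup_cons.mp hqn).1)
  show b ∈ q.support.tail
  have hb : x = b := by
    have hxq' : x ∈ q.support := by
      rw [q.support_eq_cons]; exact List.mem_cons_of_mem _ hxq
    exact h x hxp hxq'
  exact hb ▸ hxq

lemma concat_isPath {a b t : V} {p : G.Walk a b} (hp : p.IsPath)
    (h : G.Adj b t) (ht : t ∉ p.support) : (p.concat h).IsPath := by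
  rw [Walk.concat_eq_append]
  refine append_isPath hp (by simp [Walk.isPath_def, h.ne] : (Walk.cons h Walk.nil).IsPath) ?_
  intro x hxp hxq
  simp only [Walk.support_cons, Walk.support_nil, List.mem_cons, List.mem_singleton] at hxq
  rcases hxq with rfl | (rfl | h')
  · rfl
  · exact absurd hxp ht
  · exact absurd h' List.not_mem_nil

lemma adj_of_mem_support {w B : V} (Q : G.Walk w B) :
    ∀ c ∈ Q.support, c = B ∨ ∃ d, G.Adj c d := by
  induction Q with
  | nil => intro c hc; simp at hc; exact Or.inl hc
  | cons h q ih =>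
    intro c hc
    rw [Walk.support_cons, List.mem_cons] at hc
    rcases hc with rfl | hc
    · exact Or.inr ⟨_, h⟩
    · exact ih c hc

lemma adj_of_mem_support' {w B : V} (Q : G.Walk w B) (hwB : w ≠ B) :
    ∀ c ∈ Q.support, ∃ d, G.Adj c d := by
  intro c hc
  rcases adj_of_mem_support Q c hc with rfl | h
  · have hc' : c ∈ Q.reverse.support := by rwa [Walk.support_reverse, List.mem_reverse]
    rcases adj_of_mem_support Q.reverse c hc' with rfl | h
    · exact absurd rfl hwB
    · exact h
  · exact h

lemma reachable_induce {S : Set V} {a c : V} (Q : G.Walk a c)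
    (hsup : ∀ x ∈ Q.support, x ∈ S) :
    (G.induce S).Reachable ⟨a, hsup a Q.start_mem_support⟩ ⟨c, hsup c Q.end_mem_support⟩ := by
  induction Q with
  | nil => exact Reachable.refl _
  | @cons u d c h q ih =>
    have hd : ∀ x ∈ q.support, x ∈ S := fun x hx =>
      hsup x (by rw [Walk.support_cons]; exact List.mem_cons_of_mem _ hx)
    have h1 : (G.induce S).Adj ⟨u, hsup u (Walk.start_mem_support _)⟩
        ⟨d, hd d q.start_mem_support⟩ := by
      simp only [comap_adj, Function.Embedding.coe_subtype]
      exact h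
    exact (h1.reachable).trans (ih hd)

variable {T : SimpleGraph V}

lemma path_unique' (hA : T.IsAcyclic) {a c : V} {q₁ q₂ : T.Walk a c}
    (h1 : q₁.IsPath) (h2 : q₂.IsPath) : q₁ = q₂ :=
  congrArg Subtype.val (hA.path_unique ⟨q₁, h1⟩ ⟨q₂, h2⟩)

lemma length_eq_dist (hC : T.Connected) (hA : T.IsAcyclic) {a c : V} {q : T.Walk a c}
    (h : q.IsPath) : q.length = T.dist a c := by
  obtain ⟨p, hp, hl⟩ := (hC a c).exists_path_of_dist
  rw [path_unique' hA h hp, hl]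

lemma degree_eq_one_of_max [Fintype V] [DecidableEq V] [DecidableRel T.Adj] (hC : T.Connected)
    (hA : T.IsAcyclic) {S : Set V} {a u : V} (q : T.Walk a u) (hq : q.IsPath) (hau : a ≠ u)
    (hmax : ∀ x ∈ S, T.dist a x ≤ T.dist a u)
    (hcl : ∀ t, T.Adj u t → t ∉ q.support → t ∈ S) :
    T.degree u = 1 := by
  obtain ⟨s, hus, q', hq'eq⟩ := Walk.exists_eq_cons_of_ne (Ne.symm hau) q.reverse
  have key : ∀ t, T.Adj u t → t = s := by
    intro t ht
    have hts : t ∈ q.support := by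
      by_contra hns
      have h2 : (q.concat ht).IsPath := concat_isPath hq ht hns
      have h2' : T.dist a t = q.length + 1 := by
        rw [← length_eq_dist hC hA h2, Walk.length_concat]
      have h3 := hmax t (hcl t ht hns)
      rw [h2', ← length_eq_dist hC hA hq] at h3
      omega
    have htr : t ∈ q.reverse.support := by rwa [Walk.support_reverse, List.mem_reverse]
    have h4 : (q.reverse.takeUntil t htr) = Walk.cons ht Walk.nil := by
      refine path_unique' hA (hq.reverse.takeUntil htr) ?_
      simp [Walk.isPath_def, ht.ne]
    have h5 := q.reverse.take_spec htr
    rw [h4] at h5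
    have h6 := congrArg Walk.support (h5.trans hq'eq)
    simp only [Walk.support_append, Walk.support_cons, Walk.support_nil, List.cons_append,
      List.nil_append, List.cons.injEq, true_and] at h6
    rw [q'.support_eq_cons] at h6
    simp only [List.cons.injEq] at h6
    exact h6.1
  have hset : T.neighborFinset u = {s} := by
    ext t
    simp only [mem_neighborFinset, Finset.mem_singleton]
    exact ⟨key t, fun h => h ▸ hus⟩
  show (T.neighborFinset u).card = 1
  rw [hset, Finset.card_singleton]

lemma leaf_edge [Fintype V] [DecidableRel T.Adj] {u v : V} (P : T.Walk u v) (huv : u ≠ v)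
    (hdu : T.degree u = 1) {t : V} (ht : T.Adj u t) : s(u, t) ∈ P.edges := by
  obtain ⟨s, hus, P', rfl⟩ := Walk.exists_eq_cons_of_ne huv P
  have hts : t = s := by
    have h1 : (T.neighborFinset u).card = 1 := hdu
    obtain ⟨w, hw⟩ := Finset.card_eq_one.mp h1
    have h2 : t ∈ T.neighborFinset u := by simpa using ht
    have h3 : s ∈ T.neighborFinset u := by simpa using hus
    rw [hw, Finset.mem_singleton] at h2 h3
    rw [h2, h3]
  subst hts
  simp

lemma interior_two_edges [DecidableEq V] {u v x : V} {P : T.Walk u v} (hP : P.IsPath)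
    (hx : x ∈ P.support) (hxu : x ≠ u) (hxv : x ≠ v) :
    ∃ w d, w ≠ d ∧ s(x, w) ∈ P.edges ∧ s(x, d) ∈ P.edges := by
  set tk := P.takeUntil x hx with htk
  set dr := P.dropUntil x hx with hdr
  obtain ⟨d, hxd, dr', hdr'⟩ := Walk.exists_eq_cons_of_ne hxv dr
  obtain ⟨w, hxw, tk', htk'⟩ := Walk.exists_eq_cons_of_ne hxu tk.reverse
  have hPsplit : tk.append dr = P := P.take_spec hx
  have hnodup : (tk.support ++ dr.support.tail).Nodup := by
    have := hP.support_nodup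
    rw [← hPsplit, Walk.support_append] at this
    exact this
  have hwtk : w ∈ tk.support := by
    have : w ∈ tk.reverse.support := by
      rw [htk', Walk.support_cons]
      exact List.mem_cons_of_mem _ tk'.start_mem_support
    rwa [Walk.support_reverse, List.mem_reverse] at this
  have hddr : d ∈ dr.support.tail := by
    rw [hdr', Walk.support_cons]
    exact dr'.start_mem_support
  have hwd : w ≠ d := by
    intro h
    exact (List.disjoint_of_nodup_append hnodup) hwtk (h ▸ hddr)
  refine ⟨w, d, hwd, ?_, ?_⟩
  · have : s(x, w) ∈ tk.edges := by
      have : s(x, w) ∈ tk.reverse.edges := by rw [htk']; simp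
      rwa [Walk.edges_reverse, List.mem_reverse] at this
    rw [← hPsplit, Walk.edges_append, List.mem_append]
    exact Or.inl this
  · have : s(x, d) ∈ dr.edges := by rw [hdr']; simp
    rw [← hPsplit, Walk.edges_append, List.mem_append]
    exact Or.inr this

lemma edge_closure [Fintype V] [DecidableEq V] [DecidableRel T.Adj] {u v B : V} {P : T.Walk u v}
    (hP : P.IsPath) (huv : u ≠ v) (hdu : T.degree u = 1) (hdv : T.degree v = 1)
    (hdeg : ∀ x ∈ P.support, x ≠ u → x ≠ v → x ≠ B → T.degree x ≤ 2) :
    ∀ x ∈ P.support, x ≠ B → ∀ t, T.Adj x t → s(x, t) ∈ P.edges := by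
  intro x hx hxB t ht
  by_cases hxu : x = u
  · subst hxu; exact leaf_edge P huv hdu ht
  by_cases hxv : x = v
  · subst hxv
    have := leaf_edge P.reverse (Ne.symm huv) hdv ht
    rwa [Walk.edges_reverse, List.mem_reverse] at this
  · obtain ⟨w, d, hwd, hew, hed⟩ := interior_two_edges hP hx hxu hxv
    have h2 : (T.neighborFinset x).card ≤ 2 := hdeg x hx hxu hxv hxB
    have htwd : t = w ∨ t = d := by
      by_contra hc
      push_neg at hc
      have hsub : ({t, w, d} : Finset V) ⊆ T.neighborFinset x := by
        intro y hy
        simp only [Finset.mem_insert, Finset.mem_singleton] at hy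
        rcases hy with rfl | rfl | rfl
        · simpa using ht
        · simpa using P.adj_of_mem_edges hew
        · simpa using P.adj_of_mem_edges hed
      have hcard : ({t, w, d} : Finset V).card = 3 := by
        rw [Finset.card_insert_of_notMem (by simp [hc.1, hc.2]),
          Finset.card_insert_of_notMem (by simp [hwd]), Finset.card_singleton]
      have := Finset.card_le_card hsub
      omega
    rcases htwd with rfl | rfl
    · exact hew
    · exact hed

lemma final (hC : T.Connected)
    {u v B : V} (P : T.Walk u v) (hB : B ∈ P.support)
    (H : ∀ x ∈ P.support, x ≠ B → ∀ t, T.Adj x t → s(x, t) ∈ P.edges) :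
    ((T.deleteEdges {e | e ∈ P.edges}).induce
      {w | ∃ x, (T.deleteEdges {e | e ∈ P.edges}).Adj w x}).Preconnected := by
  set G' := T.deleteEdges {e | e ∈ P.edges} with hG
  set NS : Set V := {w | ∃ x, G'.Adj w x} with hNS
  have stepi : ∀ w ∈ NS, w ≠ B → w ∉ P.support := by
    rintro w ⟨x, hwx⟩ hwB hws
    rw [hG, deleteEdges_adj] at hwx
    exact hwx.2 (H w hws hwB x hwx.1)
  have stepii' : ∀ (w b : V) (Q : T.Walk w b), Q.IsPath → w ∉ P.support → b = B →
      (∀ e ∈ Q.edges, e ∉ P.edges) := by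
    intro w b Q
    induction Q with
    | nil => intro _ hw hb; rw [hb] at hw; exact absurd hB hw
    | @cons w d b h q ih =>
      intro hQ hw hb
      have hq : q.IsPath := hQ.of_cons
      intro e he
      rw [Walk.edges_cons, List.mem_cons] at he
      have hwd : s(w, d) ∉ P.edges := fun hmem => hw (P.fst_mem_support_of_mem_edges hmem)
      rcases he with rfl | he
      · exact hwd
      · by_cases hd : d ∈ P.support
        · have hdB : d = B := by
            by_contra hdB
            exact hw (P.snd_mem_support_of_mem_edges (H d hd hdB w h.symm))
          subst hb
          subst hdB
          rw [Walk.isPath_iff_eq_nil.mp hq] at he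
          simp at he
        · exact ih hq hd hb e he
  have stepii : ∀ (w : V) (Q : T.Walk w B), Q.IsPath → w ∉ P.support →
      (∀ e ∈ Q.edges, e ∉ P.edges) := fun w Q hQ hw => stepii' w B Q hQ hw rfl
  rintro ⟨w₁, h₁⟩ ⟨w₂, h₂⟩
  have reach : ∀ (w : V) (hw : w ∈ NS), ∃ hB' : B ∈ NS,
      (G'.induce NS).Reachable ⟨w, hw⟩ ⟨B, hB'⟩ := by
    intro w hw
    by_cases hwB : w = B
    · subst hwB; exact ⟨hw, Reachable.refl _⟩
    · obtain ⟨Q, hQ, -⟩ := (hC w B).exists_path_of_dist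
      have hEdges := stepii w Q hQ (stepi w hw hwB)
      have hsubG : ∀ e ∈ Q.edges, e ∈ G'.edgeSet := by
        intro e he
        rw [hG, edgeSet_deleteEdges]
        exact ⟨Q.edges_subset_edgeSet he, hEdges e he⟩
      have hsupp : ∀ c ∈ (Q.transfer G' hsubG).support, c ∈ NS := by
        intro c hc
        exact adj_of_mem_support' (Q.transfer G' hsubG) hwB c hc
      exact ⟨hsupp B (Q.transfer G' hsubG).end_mem_support,
        reachable_induce (Q.transfer G' hsubG) hsupp⟩
  obtain ⟨hB1, r1⟩ := reach w₁ h₁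
  obtain ⟨hB2, r2⟩ := reach w₂ h₂
  exact r1.trans r2.symm

end PeriphAux

/-- Every finite tree with at least two vertices contains a maximally extended
peripheral path: there are two leaves `u ≠ v` of `T` such that, for the (unique)
`u–v` path `P` in `T`, deleting the edges of `P` from `T` leaves a graph whose
non-isolated vertices induce a connected graph (i.e. the induced subgraph on the
set of non-isolated vertices is preconnected — connected, or empty). -/
theorem tree_has_maximally_extended_peripheral_path
    {V : Type*} [Fintype V] (T : SimpleGraph V) [DecidableRel T.Adj]
    (hConn : T.Connected) (hAcyclic : T.IsAcyclic)
    (hcard : 2 ≤ Fintype.card V) :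
    ∃ (u v : V) (P : T.Walk u v), u ≠ v ∧ P.IsPath ∧
      T.degree u = 1 ∧ T.degree v = 1 ∧
      ((T.deleteEdges {e | e ∈ P.edges}).induce
        {w | ∃ x, (T.deleteEdges {e | e ∈ P.edges}).Adj w x}).Preconnected := by
  classical
  have hne : Nonempty V := Fintype.card_pos_iff.mp (by omega)
  have hu' : ∀ {a c : V} (q : T.Walk a c), q.IsPath → ∀ (q₂ : T.Walk a c), q₂.IsPath → q = q₂ :=
    fun q h q₂ h₂ => PeriphAux.path_unique' hAcyclic h h₂
  have main : ∃ (u v B : V) (P : T.Walk u v), u ≠ v ∧ P.IsPath ∧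
      T.degree u = 1 ∧ T.degree v = 1 ∧ B ∈ P.support ∧
      (∀ x ∈ P.support, x ≠ B → ∀ t, T.Adj x t → s(x, t) ∈ P.edges) := by
    by_cases hbr : ∃ x, 3 ≤ T.degree x
    · -- there is a branch vertex
      obtain ⟨x0, hx0⟩ := hbr
      set r := Classical.arbitrary V with hrdef
      have hex : ∀ a c : V, ∃ q : T.Walk a c, q.IsPath :=
        fun a c => ⟨((hConn a c).exists_path_of_dist).choose,
          ((hConn a c).exists_path_of_dist).choose_spec.1⟩
      choose ρ hρ using hex
      have huρ : ∀ {a c : V} (q : T.Walk a c), q.IsPath → q = ρ a c :=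
        fun q h => hu' q h (ρ _ _) (hρ _ _)
      obtain ⟨b, hbD, hbmax⟩ := Finset.exists_max_image
        (Finset.univ.filter (fun x => 3 ≤ T.degree x)) (fun x => T.dist r x)
        ⟨x0, by simp [hx0]⟩
      rw [Finset.mem_filter] at hbD
      have hb3 : 3 ≤ T.degree b := hbD.2
      have hbmax' : ∀ x, 3 ≤ T.degree x → T.dist r x ≤ T.dist r b :=
        fun x hx => hbmax x (by simp [hx])
      set SA : V → Set V := fun n => {x | b ∉ (ρ n x).support} with hSA
      have hnilρ : ∀ n : V, ρ n n = Walk.nil := fun n => (huρ Walk.nil (by simp)).symm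
      have hmem_self : ∀ n, T.Adj b n → n ∈ SA n := by
        intro n hn
        show b ∉ (ρ n n).support
        rw [hnilρ n]
        simp only [Walk.support_nil, List.mem_singleton]
        exact hn.ne
      have lemX : ∀ n (hn : T.Adj b n), ∀ x ∈ SA n, ρ b x = Walk.cons hn (ρ n x) := by
        intro n hn x hx
        exact (huρ (Walk.cons hn (ρ n x)) ((hρ n x).cons hx)).symm
      have lemTake : ∀ n x, x ∈ SA n → ∀ c ∈ (ρ n x).support, c ∈ SA n := by
        intro n x hx c hc
        show b ∉ (ρ n c).support
        rw [← huρ ((ρ n x).takeUntil c hc) ((hρ n x).takeUntil hc)]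
        intro hb'
        exact hx ((ρ n x).support_takeUntil_subset hc hb')
      have hbnotSA : ∀ n, b ∉ SA n := fun n hb' => hb' (ρ n b).end_mem_support
      have badunique : ∀ n₁ n₂, T.Adj b n₁ → T.Adj b n₂ →
          b ∉ (ρ n₁ r).support → b ∉ (ρ n₂ r).support → n₁ = n₂ := by
        intro n₁ n₂ h1 h2 hb1 hb2
        have e1 : ρ b r = Walk.cons h1 (ρ n₁ r) := (huρ _ ((hρ n₁ r).cons hb1)).symm
        have e2 : ρ b r = Walk.cons h2 (ρ n₂ r) := (huρ _ ((hρ n₂ r).cons hb2)).symm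
        have h6 := congrArg Walk.support (e1.symm.trans e2)
        rw [Walk.support_cons, Walk.support_cons, (ρ n₁ r).support_eq_cons,
          (ρ n₂ r).support_eq_cons] at h6
        simp only [List.cons.injEq] at h6
        exact h6.2.1
      set GN := (T.neighborFinset b).filter (fun n => b ∈ (ρ n r).support) with hGN
      have hGN2 : 2 ≤ GN.card := by
        have htot := Finset.card_filter_add_card_filter_not
          (s := T.neighborFinset b) (p := fun n => b ∈ (ρ n r).support)
        have hbad : ((T.neighborFinset b).filter (fun n => ¬ b ∈ (ρ n r).support)).card ≤ 1 := by
          refine Finset.card_le_one.mpr ?_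
          intro n₁ hn₁ n₂ hn₂
          rw [Finset.mem_filter, mem_neighborFinset] at hn₁ hn₂
          exact badunique n₁ n₂ hn₁.1 hn₂.1 hn₁.2 hn₂.2
        have hcardnb : (T.neighborFinset b).card = T.degree b := rfl
        rw [← hGN] at htot
        omega
      obtain ⟨y, hy, z, hz, hyz⟩ := Finset.one_lt_card.mp (by omega : 1 < GN.card)
      rw [hGN, Finset.mem_filter, mem_neighborFinset] at hy hz
      obtain ⟨hyadj, hyr⟩ := hy
      obtain ⟨hzadj, hzr⟩ := hz
      have lemEdge : ∀ n (hn : T.Adj b n), b ∈ (ρ n r).support → n ∉ (ρ b r).support := by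
        intro n hn hb'
        have e1 : (ρ n r).takeUntil b hb' = ρ n b := huρ _ ((hρ n r).takeUntil hb')
        have e2 : (ρ n r).dropUntil b hb' = ρ b r := huρ _ ((hρ n r).dropUntil hb')
        have e3 : ρ n b = Walk.cons hn.symm Walk.nil :=
          (huρ _ (by simp [Walk.isPath_def, hn.ne'])).symm
        have e4 := (ρ n r).take_spec hb'
        rw [e1, e3, e2, Walk.cons_append, Walk.nil_append] at e4
        have h7 := (hρ n r).support_nodup
        rw [← e4, Walk.support_cons] at h7
        exact (List.nodup_cons.mp h7).1
      have lemKEY : ∀ n (hn : T.Adj b n), b ∈ (ρ n r).support →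
          ∀ x ∈ SA n, T.dist r x = T.dist r b + T.dist b x := by
        intro n hn hnr x hx
        have hdisj : ∀ c, c ∈ (ρ r b).support → c ∈ (ρ b x).support → c = b := by
          intro c hc1 hc2
          by_contra hcb
          have hc2' : c ∈ (ρ n x).support := by
            rw [lemX n hn x hx, Walk.support_cons, List.mem_cons] at hc2
            rcases hc2 with rfl | hc2
            · exact absurd rfl hcb
            · exact hc2
          have hcSA : c ∈ SA n := lemTake n x hx c hc2'
          have e5 : (ρ r b).reverse = ρ b r := huρ _ (hρ r b).reverse
          have hcbr : c ∈ (ρ b r).support := by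
            rw [← e5, Walk.support_reverse, List.mem_reverse]
            exact hc1
          have htk : ((ρ b r).takeUntil c hcbr).IsPath := (hρ b r).takeUntil hcbr
          have hnmem : n ∉ ((ρ b r).takeUntil c hcbr).support :=
            fun hh => lemEdge n hn hnr ((ρ b r).support_takeUntil_subset hcbr hh)
          have e6 : Walk.cons hn.symm ((ρ b r).takeUntil c hcbr) = ρ n c :=
            huρ _ (htk.cons hnmem)
          refine hcSA ?_
          rw [← e6, Walk.support_cons]
          exact List.mem_cons_of_mem _ (Walk.start_mem_support _)
        have hWpath : ((ρ r b).append (ρ b x)).IsPath :=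
          PeriphAux.append_isPath (hρ r b) (hρ b x) hdisj
        have e7 : (ρ r b).append (ρ b x) = ρ r x := huρ _ hWpath
        have h8 := congrArg Walk.length e7
        rw [Walk.length_append] at h8
        rw [← PeriphAux.length_eq_dist hConn hAcyclic (hρ r x),
            ← PeriphAux.length_eq_dist hConn hAcyclic (hρ r b),
            ← PeriphAux.length_eq_dist hConn hAcyclic (hρ b x)]
        omega
      have lemDeg : ∀ n (hn : T.Adj b n), b ∈ (ρ n r).support →
          ∀ x ∈ SA n, x ≠ b → T.degree x ≤ 2 := by
        intro n hn hnr x hx hxb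
        by_contra hd
        push_neg at hd
        have h1 := hbmax' x (by omega)
        have h2 := lemKEY n hn hnr x hx
        have h3 : 0 < T.dist b x := hConn.pos_dist_of_ne (Ne.symm hxb)
        omega
      have legmain : ∀ n (hn : T.Adj b n), b ∈ (ρ n r).support →
          ∃ u0, u0 ∈ SA n ∧ u0 ≠ b ∧ T.degree u0 = 1 := by
        intro n hn hnr
        obtain ⟨u0, hu0mem, hu0max⟩ := Finset.exists_max_image
          (Finset.univ.filter (fun x => x ∈ SA n)) (fun x => T.dist b x)
          ⟨n, by simp only [Finset.mem_filter, Finset.mem_univ, true_and]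
                 exact hmem_self n hn⟩
        rw [Finset.mem_filter] at hu0mem
        have hu0SA : u0 ∈ SA n := hu0mem.2
        have hu0max' : ∀ x ∈ SA n, T.dist b x ≤ T.dist b u0 := by
          intro x hx
          refine hu0max x ?_
          simp only [Finset.mem_filter, Finset.mem_univ, true_and]
          exact hx
        have hu0b : u0 ≠ b := fun h => hbnotSA n (h ▸ hu0SA)
        refine ⟨u0, hu0SA, hu0b, ?_⟩
        refine PeriphAux.degree_eq_one_of_max hConn hAcyclic (ρ b u0) (hρ b u0)
          (Ne.symm hu0b) hu0max' ?_
        intro t ht hts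
        show b ∉ (ρ n t).support
        have hX := lemX n hn u0 hu0SA
        have htn : t ∉ (ρ n u0).support := by
          intro hh
          exact hts (by rw [hX, Walk.support_cons]; exact List.mem_cons_of_mem _ hh)
        have e8 : (ρ n u0).concat ht = ρ n t :=
          huρ _ (PeriphAux.concat_isPath (hρ n u0) ht htn)
        rw [← e8, Walk.support_concat]
        intro hb'
        rcases List.mem_append.mp hb' with hb' | hb'
        · exact hu0SA hb'
        · rw [List.mem_singleton] at hb'
          exact hts (hb' ▸ (ρ b u0).start_mem_support)
      obtain ⟨uu, huSA, hub, hduu⟩ := legmain y hyadj hyr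
      obtain ⟨vv, hvSA, hvb, hdvv⟩ := legmain z hzadj hzr
      have hdisjSA : ∀ x, x ∈ SA y → x ∈ SA z → False := by
        intro x h1 h2
        have e1 := lemX y hyadj x h1
        have e2 := lemX z hzadj x h2
        have h6 := congrArg Walk.support (e1.symm.trans e2)
        rw [Walk.support_cons, Walk.support_cons, (ρ y x).support_eq_cons,
          (ρ z x).support_eq_cons] at h6
        simp only [List.cons.injEq] at h6
        exact hyz h6.2.1
      have huv : uu ≠ vv := fun h => hdisjSA uu huSA (h ▸ hvSA)
      have hsupSA : ∀ n (hn : T.Adj b n), ∀ x0, x0 ∈ SA n →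
          ∀ c ∈ (ρ b x0).support, c ≠ b → c ∈ SA n := by
        intro n hn x0 hx0 c hc hcb
        rw [lemX n hn x0 hx0, Walk.support_cons, List.mem_cons] at hc
        rcases hc with rfl | hc
        · exact absurd rfl hcb
        · exact lemTake n x0 hx0 c hc
      set P := (ρ b uu).reverse.append (ρ b vv) with hPdef
      have hPpath : P.IsPath := by
        refine PeriphAux.append_isPath (hρ b uu).reverse (hρ b vv) ?_
        intro c hc1 hc2
        rw [Walk.support_reverse, List.mem_reverse] at hc1
        by_contra hcb
        exact hdisjSA c (hsupSA y hyadj uu huSA c hc1 hcb) (hsupSA z hzadj vv hvSA c hc2 hcb)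
      have hBsup : b ∈ P.support := by
        rw [hPdef, Walk.mem_support_append_iff]
        exact Or.inr (Walk.start_mem_support _)
      have hdeg : ∀ x ∈ P.support, x ≠ uu → x ≠ vv → x ≠ b → T.degree x ≤ 2 := by
        intro x hx _ _ hxb
        rw [hPdef, Walk.mem_support_append_iff, Walk.support_reverse, List.mem_reverse] at hx
        rcases hx with hx | hx
        · exact lemDeg y hyadj hyr x (hsupSA y hyadj uu huSA x hx hxb) hxb
        · exact lemDeg z hzadj hzr x (hsupSA z hzadj vv hvSA x hx hxb) hxb
      exact ⟨uu, vv, b, P, huv, hPpath, hduu, hdvv, hBsup,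
        PeriphAux.edge_closure hPpath huv hduu hdvv hdeg⟩
    · -- all degrees at most 2 : take a diameter path
      push_neg at hbr
      obtain ⟨⟨u, v⟩, -, hmax⟩ := Finset.exists_max_image (Finset.univ : Finset (V × V))
        (fun p => T.dist p.1 p.2) ⟨(Classical.arbitrary V, Classical.arbitrary V), Finset.mem_univ _⟩
      have hmax' : ∀ x y : V, T.dist x y ≤ T.dist u v :=
        fun x y => hmax (x, y) (Finset.mem_univ _)
      obtain ⟨a, b', hab⟩ := Fintype.exists_pair_of_one_lt_card (α := V) (by omega)
      have hdpos : 0 < T.dist u v := lt_of_lt_of_le (hConn.pos_dist_of_ne hab) (hmax' a b')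
      have huv : u ≠ v := by
        intro h; subst h; rw [SimpleGraph.dist_self] at hdpos; omega
      obtain ⟨q, hq, hql⟩ := (hConn u v).exists_path_of_dist
      have hdv : T.degree v = 1 :=
        PeriphAux.degree_eq_one_of_max hConn hAcyclic (S := Set.univ) q hq huv
          (fun x _ => hmax' u x) (fun t _ _ => Set.mem_univ t)
      have hdu : T.degree u = 1 :=
        PeriphAux.degree_eq_one_of_max hConn hAcyclic (S := Set.univ) q.reverse hq.reverse
          (Ne.symm huv)
          (fun x _ => by rw [SimpleGraph.dist_comm]
                         rw [SimpleGraph.dist_comm (u := v) (v := u)]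
                         exact hmax' x v)
          (fun t _ _ => Set.mem_univ t)
      exact ⟨u, v, u, q, huv, hq, hdu, hdv, q.start_mem_support,
        PeriphAux.edge_closure hq huv hdu hdv
          (fun x _ _ _ _ => by have := hbr x; omega)⟩
  obtain ⟨u, v, B, P, h1, h2, h3, h4, h5, h6⟩ := main
  exact ⟨u, v, P, h1, h2, h3, h4, PeriphAux.final hConn P h5 h6⟩
end

section
/- Every finite tree T with n vertices admits a decomposition of its edge set into at most ⌊(n+1)/2⌋ edge-disjoint paths. -/
open SimpleGraph

/-- A path decomposition of `G`: a list of paths of `G` that are pairwise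
edge-disjoint and whose edges together are exactly the edges of `G`. -/
def IsPathDecomposition {V : Type*} (G : SimpleGraph V)
    (C : List ((u : V) × (v : V) × G.Walk u v)) : Prop :=
  (∀ p ∈ C, p.2.2.IsPath) ∧
  C.Pairwise (fun p q => ∀ e, e ∈ p.2.2.edges → e ∉ q.2.2.edges) ∧
  (∀ e, e ∈ G.edgeSet ↔ ∃ p ∈ C, e ∈ p.2.2.edges)

namespace GallaiTreeAux

open SimpleGraph Walk

variable {V : Type*}

/-- second vertex of an append is second vertex of the first walk. -/
lemma getVert_one_append {G : SimpleGraph V} {a b c : V} (q : G.Walk a b) (r : G.Walk b c)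
    (hq : ¬ q.Nil) : (q.append r).getVert 1 = q.getVert 1 := by
  cases q with
  | nil => simp at hq
  | cons h t =>
    show ((Walk.cons h t).append r).getVert (0 + 1) = (Walk.cons h t).getVert (0 + 1)
    rw [Walk.cons_append, Walk.getVert_cons_succ, Walk.getVert_cons_succ,
      Walk.getVert_zero, Walk.getVert_zero]

/-- in a path, an edge containing the initial vertex identifies the second vertex. -/
lemma eq_getVert_one_of_mem_edges {G : SimpleGraph V} {a c w : V} {q : G.Walk a c}
    (hq : q.IsPath) (he : s(a, w) ∈ q.edges) : w = q.getVert 1 := by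
  cases q with
  | nil => simp at he
  | cons h t =>
    rw [Walk.edges_cons, List.mem_cons] at he
    rcases he with he | he
    · have := Sym2.congr_right.mp he
      rw [this]
      show _ = (Walk.cons h t).getVert (0 + 1)
      rw [Walk.getVert_cons_succ, Walk.getVert_zero]
    · exact absurd (Walk.fst_mem_support_of_mem_edges t he)
        ((Walk.cons_isPath_iff _ _).mp hq).2

lemma walk_nil_eq {G : SimpleGraph V} {a b : V} {p : G.Walk a b} (h : p.Nil) : a = b :=
  Walk.eq_of_length_eq_zero (Walk.nil_iff_length_eq.mp h)

/-- every finite tree with at least two vertices has a leaf. -/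
lemma exists_leaf [Fintype V] (G : SimpleGraph V) (hc : G.Connected) (ha : G.IsAcyclic)
    (h2 : 2 ≤ Fintype.card V) : ∃ v u, G.Adj v u ∧ ∀ w, G.Adj v w → w = u := by
  classical
  set P : ℕ → Prop := fun n => ∃ (x : V) (y : V) (p : G.Walk x y), p.IsPath ∧ p.length = n
    with hPdef
  obtain ⟨x, y, hxy⟩ := Fintype.exists_pair_of_one_lt_card h2
  obtain ⟨w0⟩ := hc x y
  have hp0path : (w0.toPath : G.Walk x y).IsPath := w0.toPath.2
  have hp0 : 1 ≤ (w0.toPath : G.Walk x y).length := by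
    rcases Nat.eq_zero_or_pos (w0.toPath : G.Walk x y).length with h | h
    · exact absurd (Walk.eq_of_length_eq_zero h) hxy
    · exact h
  have hPm : P (w0.toPath : G.Walk x y).length := ⟨x, y, _, hp0path, rfl⟩
  have hmle : (w0.toPath : G.Walk x y).length ≤ Fintype.card V := le_of_lt hp0path.length_lt
  set N := Nat.findGreatest P (Fintype.card V) with hNdef
  have hPN : P N := Nat.findGreatest_spec hmle hPm
  have hN1 : 1 ≤ N := le_trans hp0 (Nat.le_findGreatest hmle hPm)
  obtain ⟨a, b, p, hp, hlen⟩ := hPN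
  cases p with
  | nil => rw [Walk.length_nil] at hlen; omega
  | @cons _ c _ hadj q =>
    refine ⟨a, c, hadj, ?_⟩
    intro w hw
    by_cases hws : w ∈ (Walk.cons hadj q).support
    · set p' : G.Walk a b := Walk.cons hadj q with hp'def
      have hwa : w ≠ a := fun h => G.irrefl (h ▸ hw)
      have hq' : (p'.takeUntil w hws).IsPath := hp.takeUntil hws
      have hcyc := ha (Walk.cons hw (p'.takeUntil w hws).reverse)
      rw [Walk.cons_isCycle_iff] at hcyc
      have hedge : s(a, w) ∈ (p'.takeUntil w hws).edges := by
        by_contra hne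
        exact hcyc ⟨hq'.reverse, by rwa [Walk.edges_reverse, List.mem_reverse]⟩
      have hw1 : w = (p'.takeUntil w hws).getVert 1 := eq_getVert_one_of_mem_edges hq' hedge
      have hnn : ¬ (p'.takeUntil w hws).Nil := fun h => hwa (walk_nil_eq h).symm
      have h2' : (p'.takeUntil w hws).getVert 1 = p'.getVert 1 := by
        conv_rhs => rw [← Walk.take_spec p' hws]
        exact (getVert_one_append _ _ hnn).symm
      rw [hw1, h2']
      show p'.getVert (0 + 1) = c
      rw [hp'def, Walk.getVert_cons_succ, Walk.getVert_zero]
    · have hp2 : (Walk.cons hw.symm (Walk.cons hadj q)).IsPath := hp.cons hws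
      have hlt := hp2.length_lt
      rw [Walk.length_cons, hlen] at hlt
      have hng := Nat.findGreatest_is_greatest (P := P) (n := Fintype.card V)
        (k := N + 1) (by omega) (by omega)
      exact absurd ⟨w, b, _, hp2, by rw [Walk.length_cons, hlen]⟩ hng

/-- lift a walk avoiding `v` to the induced graph on `{w // w ≠ v}`. -/
def liftWalk (G : SimpleGraph V) (v : V) :
    ∀ {a b : V} (p : G.Walk a b), (∀ x ∈ p.support, x ≠ v) → (ha : a ≠ v) → (hb : b ≠ v) →
      (G.comap (Subtype.val : {w : V // w ≠ v} → V)).Walk ⟨a, ha⟩ ⟨b, hb⟩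
  | _, _, Walk.nil, _, _, _ => Walk.nil
  | _, _, Walk.cons hadj q, h, _, hb =>
      Walk.cons (by exact hadj)
        (liftWalk G v q
          (fun x hx => h x (by rw [Walk.support_cons]; exact List.mem_cons_of_mem _ hx))
          (h _ (by rw [Walk.support_cons]; exact List.mem_cons_of_mem _ q.start_mem_support))
          hb)


lemma flatMap_pair_length {α : Type*} {β : Type*} (g h : α → β) (l : List α) :
    (l.flatMap (fun p => [g p, h p])).length = 2 * l.length := by
  induction l with
  | nil => rfl
  | cons x l ih =>
    simp only [List.flatMap_cons, List.length_append, List.length_cons, List.length_nil, ih]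
    omega

/-- The extension step: given a path ending at the leaf's neighbour, extend it to the leaf. -/
lemma extend_case {T : SimpleGraph V} {v u b : V} (hadj : T.Adj v u)
    (w : T.Walk u b) (D : List ((x : V) × (y : V) × T.Walk x y))
    (hwpath : w.IsPath)
    (hwsup : ∀ x ∈ w.support, x ≠ v)
    (hDpath : ∀ q ∈ D, q.2.2.IsPath)
    (hDdisj : D.Pairwise (fun p q => ∀ e, e ∈ p.2.2.edges → e ∉ q.2.2.edges))
    (hDv : ∀ q ∈ D, ∀ e ∈ q.2.2.edges, v ∉ e)
    (hpD : ∀ q ∈ D, ∀ e, e ∈ w.edges → e ∉ q.2.2.edges)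
    (hcov : ∀ e, e ∈ T.edgeSet ↔ e = s(v, u) ∨ e ∈ w.edges ∨ ∃ q ∈ D, e ∈ q.2.2.edges)
    (hnodup : (u :: b :: D.flatMap (fun p => [p.1, p.2.1])).Nodup)
    (hne : ∀ x ∈ b :: D.flatMap (fun p => [p.1, p.2.1]), x ≠ v) :
    ∃ C : List ((x : V) × (y : V) × T.Walk x y),
      IsPathDecomposition T C ∧ (C.flatMap (fun p => [p.1, p.2.1])).Nodup := by
  refine ⟨⟨v, b, Walk.cons hadj w⟩ :: D, ⟨?_, ?_, ?_⟩, ?_⟩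
  · rintro p hp
    rcases List.mem_cons.mp hp with rfl | hp
    · exact hwpath.cons (fun h => hwsup v h rfl)
    · exact hDpath p hp
  · rw [List.pairwise_cons]
    refine ⟨?_, hDdisj⟩
    intro q hq e he
    rw [Walk.edges_cons, List.mem_cons] at he
    rcases he with rfl | he
    · intro hmem
      exact hDv q hq _ hmem (by simp)
    · exact hpD q hq e he
  · intro e
    rw [hcov e]
    constructor
    · rintro (rfl | he | ⟨q, hq, he⟩)
      · exact ⟨_, List.mem_cons_self, by rw [Walk.edges_cons]; exact List.mem_cons_self⟩
      · exact ⟨_, List.mem_cons_self, by rw [Walk.edges_cons]; exact List.mem_cons_of_mem _ he⟩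
      · exact ⟨q, List.mem_cons_of_mem _ hq, he⟩
    · rintro ⟨q, hq, he⟩
      rcases List.mem_cons.mp hq with rfl | hq
      · rw [Walk.edges_cons, List.mem_cons] at he
        tauto
      · exact Or.inr (Or.inr ⟨q, hq, he⟩)
  · simp only [List.flatMap_cons, List.cons_append, List.nil_append]
    rw [List.nodup_cons]
    exact ⟨fun hv => hne v hv rfl, hnodup.of_cons⟩

lemma aux : ∀ (n : ℕ) (V : Type*) [Fintype V] (T : SimpleGraph V),
    Fintype.card V ≤ n → T.Connected → T.IsAcyclic →
    ∃ C : List ((x : V) × (y : V) × T.Walk x y),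
      IsPathDecomposition T C ∧ (C.flatMap (fun p => [p.1, p.2.1])).Nodup := by
  intro n
  induction n with
  | zero =>
    intro V _ T hcard hc _
    have : Nonempty V := hc.nonempty
    have := Fintype.card_pos (α := V)
    omega
  | succ n ih =>
    intro V _ T hcard hc ha
    classical
    by_cases h1 : Fintype.card V ≤ 1
    · refine ⟨[], ⟨by simp, by simp, fun e => ?_⟩, by simp⟩
      constructor
      · intro he
        exfalso
        revert he
        refine Sym2.ind (fun x y he => ?_) e
        exact (T.mem_edgeSet.mp he).ne (Fintype.card_le_one_iff.mp h1 x y)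
      · rintro ⟨p, hp, -⟩
        exact absurd hp List.not_mem_nil
    · push_neg at h1
      obtain ⟨v, u, hadj, huniq⟩ := exists_leaf T hc ha h1
      have hvu : v ≠ u := hadj.ne
      let T' : SimpleGraph {w : V // w ≠ v} := T.comap (Subtype.val : {w : V // w ≠ v} → V)
      have hinj : Function.Injective (Subtype.val : {w : V // w ≠ v} → V) := Subtype.val_injective
      let f : T' →g T := ⟨Subtype.val, fun h => h⟩
      have hcard' : Fintype.card {w : V // w ≠ v} ≤ n := by
        have hlt := Fintype.card_lt_of_injective_of_notMem
          (Subtype.val : {w : V // w ≠ v} → V) hinj (b := v)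
          (by rintro ⟨x, hx⟩; exact x.prop hx)
        omega
      have hsupavoid : ∀ (a b : {w : V // w ≠ v}) (p : T.Walk a.val b.val), p.IsPath →
          ∀ x ∈ p.support, x ≠ v := by
        intro a b p hp x hx hxv
        subst hxv
        have hqn : ¬ (p.takeUntil x hx).Nil := fun h => a.prop (walk_nil_eq h)
        have hrn : ¬ (p.dropUntil x hx).Nil := fun h => b.prop (walk_nil_eq h).symm
        have hqrevn : ¬ (p.takeUntil x hx).reverse.Nil := by
          rw [Walk.nil_iff_length_eq, Walk.length_reverse]
          rw [Walk.nil_iff_length_eq] at hqn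
          exact hqn
        obtain ⟨xq, hvxq, q', hq'⟩ := Walk.not_nil_iff.mp hqrevn
        obtain ⟨yr, hvyr, r', hr'⟩ := Walk.not_nil_iff.mp hrn
        have hxq : xq = u := huniq xq hvxq
        have hyr : yr = u := huniq yr hvyr
        have hxqsup : xq ∈ (p.takeUntil x hx).support := by
          have : xq ∈ (p.takeUntil x hx).reverse.support := by
            rw [hq', Walk.support_cons]
            exact List.mem_cons_of_mem _ q'.start_mem_support
          rwa [Walk.support_reverse, List.mem_reverse] at this
        have hyrsup : yr ∈ (p.dropUntil x hx).support.tail := by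
          rw [hr', Walk.support_cons, List.tail_cons]
          exact r'.start_mem_support
        have hnd := hp.support_nodup
        rw [← Walk.take_spec p hx, Walk.support_append, List.nodup_append] at hnd
        exact hnd.2.2 xq hxqsup xq (by rw [hxq, ← hyr]; exact hyrsup) rfl
      have hc' : T'.Connected := by
        rw [connected_iff]
        refine ⟨fun a b => ?_, ⟨⟨u, hadj.ne'⟩⟩⟩
        obtain ⟨w0⟩ := hc a.val b.val
        exact ⟨liftWalk T v (w0.toPath : T.Walk a.val b.val)
          (hsupavoid a b _ w0.toPath.2) a.prop b.prop⟩
      have ha' : T'.IsAcyclic := by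
        intro x c hcyc
        exact ha (c.map f) ((Walk.map_isCycle_iff_of_injective (by exact hinj)).mpr hcyc)
      obtain ⟨C', ⟨hC'path, hC'disj, hC'cov⟩, hC'nodup⟩ := ih {w : V // w ≠ v} T' hcard' hc' ha'
      let F : ((x : {w : V // w ≠ v}) × (y : {w : V // w ≠ v}) × T'.Walk x y) →
          ((x : V) × (y : V) × T.Walk x y) :=
        fun p => ⟨p.1.val, p.2.1.val, p.2.2.map f⟩
      set C := C'.map F with hC
      have hA : ∀ p ∈ C, p.2.2.IsPath := by
        intro p hp
        obtain ⟨p', hp', rfl⟩ := List.mem_map.mp hp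
        exact Walk.map_isPath_of_injective (by exact hinj) (hC'path p' hp')
      have hCedge : ∀ p ∈ C, ∀ e ∈ p.2.2.edges, v ∉ e := by
        intro p hp e he hv
        obtain ⟨p', hp', rfl⟩ := List.mem_map.mp hp
        rw [show (F p').2.2 = p'.2.2.map f from rfl, Walk.edges_map, List.mem_map] at he
        obtain ⟨e', he', rfl⟩ := he
        rw [Sym2.mem_map] at hv
        obtain ⟨x, hx, hxv⟩ := hv
        exact x.prop hxv
      have hBsup : ∀ p ∈ C, ∀ x ∈ p.2.2.support, x ≠ v := by
        intro p hp x hx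
        obtain ⟨p', hp', rfl⟩ := List.mem_map.mp hp
        rw [show (F p').2.2 = p'.2.2.map f from rfl, Walk.support_map, List.mem_map] at hx
        obtain ⟨x', hx', rfl⟩ := hx
        exact x'.prop
      have hD : C.Pairwise (fun p q => ∀ e, e ∈ p.2.2.edges → e ∉ q.2.2.edges) := by
        rw [hC, List.pairwise_map]
        refine hC'disj.imp ?_
        intro p' q' h e he hq
        rw [show (F p').2.2 = p'.2.2.map f from rfl, Walk.edges_map, List.mem_map] at he
        rw [show (F q').2.2 = q'.2.2.map f from rfl, Walk.edges_map, List.mem_map] at hq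
        obtain ⟨e1, he1, rfl⟩ := he
        obtain ⟨e2, he2, heq⟩ := hq
        exact h e1 he1 ((Sym2.map.injective hinj heq) ▸ he2)
      have hE : ∀ e, (e ∈ T.edgeSet ∧ v ∉ e) ↔ ∃ p ∈ C, e ∈ p.2.2.edges := by
        intro e
        constructor
        · rintro ⟨he, hv⟩
          revert he hv
          refine Sym2.ind (fun x y => ?_) e
          intro he hv
          rw [SimpleGraph.mem_edgeSet] at he
          rw [Sym2.mem_iff] at hv
          push_neg at hv
          have hx : x ≠ v := fun h => hv.1 h.symm
          have hy : y ≠ v := fun h => hv.2 h.symm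
          have hT' : s((⟨x, hx⟩ : {w : V // w ≠ v}), (⟨y, hy⟩ : {w : V // w ≠ v})) ∈ T'.edgeSet := he
          obtain ⟨p', hp', he'⟩ := (hC'cov _).mp hT'
          refine ⟨F p', List.mem_map_of_mem hp', ?_⟩
          show _ ∈ (p'.2.2.map f).edges
          rw [Walk.edges_map, List.mem_map]
          exact ⟨_, he', Sym2.map_pair_eq _ _ _⟩
        · rintro ⟨p, hp, he⟩
          exact ⟨Walk.edges_subset_edgeSet _ he, fun hv => hCedge p hp e he hv⟩
      have hG : ∀ x ∈ C.flatMap (fun p => [p.1, p.2.1]), x ≠ v := by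
        intro x hx
        rw [List.mem_flatMap] at hx
        obtain ⟨p, hp, hx⟩ := hx
        obtain ⟨p', hp', rfl⟩ := List.mem_map.mp hp
        simp only [List.mem_cons, List.mem_singleton, List.not_mem_nil, or_false] at hx
        rcases hx with rfl | rfl
        · exact p'.1.prop
        · exact p'.2.1.prop
      have hF : (C.flatMap (fun p => [p.1, p.2.1])).Nodup := by
        have heq : C.flatMap (fun p => [p.1, p.2.1])
            = List.map Subtype.val (C'.flatMap (fun p => [p.1, p.2.1])) := by
          rw [hC, List.flatMap_map, List.map_flatMap]
          rfl
        rw [heq]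
        exact hC'nodup.map hinj
      have hvedge : ∀ e ∈ T.edgeSet, v ∈ e → e = s(v, u) := by
        intro e
        refine Sym2.ind (fun x y => ?_) e
        intro he hv
        rw [SimpleGraph.mem_edgeSet] at he
        rw [Sym2.mem_iff] at hv
        rcases hv with rfl | rfl
        · rw [huniq y he]
        · rw [Sym2.eq_swap, huniq x he.symm]
      by_cases hu : ∃ p ∈ C, p.1 = u ∨ p.2.1 = u
      · obtain ⟨p, hpC, hpu⟩ := hu
        have hperm : C.Perm (p :: C.erase p) := List.perm_cons_erase hpC
        set D := C.erase p with hDdef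
        have hmemD : ∀ q ∈ D, q ∈ C := fun q hq => List.mem_of_mem_erase hq
        have hpair : (p :: D).Pairwise (fun p q => ∀ e, e ∈ p.2.2.edges → e ∉ q.2.2.edges) :=
          (hperm.pairwise_iff (fun h e he hx => h e hx he)).mp hD
        rw [List.pairwise_cons] at hpair
        have hnd : ((p :: D).flatMap (fun q => [q.1, q.2.1])).Nodup :=
          ((hperm.flatMap_right _).nodup_iff).mp hF
        have hGpD : ∀ x ∈ (p :: D).flatMap (fun q => [q.1, q.2.1]), x ≠ v :=
          fun x hx => hG x ((hperm.flatMap_right _).mem_iff.mpr hx)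
        have hcovP : ∀ e, e ∈ T.edgeSet ↔
            e = s(v, u) ∨ e ∈ p.2.2.edges ∨ ∃ q ∈ D, e ∈ q.2.2.edges := by
          intro e
          constructor
          · intro he
            by_cases hv : v ∈ e
            · exact Or.inl (hvedge e he hv)
            · obtain ⟨q, hq, he'⟩ := (hE e).mp ⟨he, hv⟩
              rw [hperm.mem_iff] at hq
              rcases List.mem_cons.mp hq with rfl | hq
              · exact Or.inr (Or.inl he')
              · exact Or.inr (Or.inr ⟨q, hq, he'⟩)
          · rintro (rfl | he | ⟨q, hq, he⟩)
            · exact hadj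
            · exact ((hE e).mpr ⟨p, hpC, he⟩).1
            · exact ((hE e).mpr ⟨q, hmemD q hq, he⟩).1
        obtain ⟨a, b, wlk⟩ := p
        simp only at hpu
        rcases hpu with rfl | rfl
        · exact extend_case hadj wlk D (hA _ hpC) (hBsup _ hpC)
            (fun q hq => hA q (hmemD q hq)) hpair.2
            (fun q hq => hCedge q (hmemD q hq))
            (fun q hq e he => hpair.1 q hq e he)
            hcovP
            (by simp only [List.flatMap_cons, List.cons_append, List.nil_append] at hnd
                exact hnd)
            (by
              intro x hx
              refine hGpD x ?_
              simp only [List.flatMap_cons, List.cons_append, List.nil_append]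
              exact List.mem_cons_of_mem _ hx)
        · refine extend_case hadj wlk.reverse D ((hA _ hpC).reverse) ?_
            (fun q hq => hA q (hmemD q hq)) hpair.2
            (fun q hq => hCedge q (hmemD q hq))
            ?_ ?_ ?_ ?_
          · intro x hx
            rw [Walk.support_reverse, List.mem_reverse] at hx
            exact hBsup _ hpC x hx
          · intro q hq e he
            rw [Walk.edges_reverse, List.mem_reverse] at he
            exact hpair.1 q hq e he
          · intro e
            have hrev : (e ∈ wlk.reverse.edges) = (e ∈ wlk.edges) := by
              rw [Walk.edges_reverse, List.mem_reverse]
            rw [hrev]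
            exact hcovP e
          · have hswap : ((⟨a, b, wlk⟩ : (x : V) × (y : V) × T.Walk x y) :: D).flatMap
                (fun q => [q.1, q.2.1]) = a :: b :: D.flatMap (fun q => [q.1, q.2.1]) := by
              simp
            rw [hswap] at hnd
            simp only [List.nodup_cons, List.mem_cons] at hnd ⊢
            tauto
          · intro x hx
            rcases List.mem_cons.mp hx with rfl | hx
            · exact hGpD x (by simp)
            · exact hGpD x (by
                simp only [List.flatMap_cons]
                exact List.mem_append_right _ hx)
      · refine ⟨⟨v, u, Walk.cons hadj Walk.nil⟩ :: C, ⟨?_, ?_, ?_⟩, ?_⟩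
        · rintro q hq
          rcases List.mem_cons.mp hq with rfl | hq
          · simp [hadj.ne]
          · exact hA q hq
        · rw [List.pairwise_cons]
          refine ⟨?_, hD⟩
          intro q hq e he
          simp only [Walk.edges_cons, Walk.edges_nil, List.mem_singleton] at he
          subst he
          exact fun hq' => hCedge q hq _ hq' (by simp)
        · intro e
          constructor
          · intro he
            by_cases hv : v ∈ e
            · refine ⟨_, List.mem_cons_self, ?_⟩
              simp [hvedge e he hv]
            · obtain ⟨q, hq, he'⟩ := (hE e).mp ⟨he, hv⟩
              exact ⟨q, List.mem_cons_of_mem _ hq, he'⟩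
          · rintro ⟨q, hq, he⟩
            rcases List.mem_cons.mp hq with rfl | hq
            · simp only [Walk.edges_cons, Walk.edges_nil, List.mem_singleton] at he
              rw [he]
              exact hadj
            · exact ((hE e).mpr ⟨q, hq, he⟩).1
        · simp only [List.flatMap_cons, List.cons_append, List.nil_append]
          refine List.nodup_cons.mpr ⟨?_, List.nodup_cons.mpr ⟨?_, hF⟩⟩
          · intro hv
            rcases List.mem_cons.mp hv with rfl | hv
            · exact hvu rfl
            · exact hG v hv rfl
          · intro huin
            rw [List.mem_flatMap] at huin
            obtain ⟨q, hq, hu'⟩ := huin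
            simp only [List.mem_cons, List.mem_singleton, List.not_mem_nil, or_false] at hu'
            exact hu ⟨q, hq, by tauto⟩

end GallaiTreeAux

/-- Gallai's conjecture for trees: every finite tree on `n` vertices admits a
decomposition of its edge set into at most `⌊(n+1)/2⌋` edge-disjoint paths. -/
theorem tree_path_decomposition_gallai_bound
    {V : Type*} [Fintype V] (T : SimpleGraph V)
    (hConn : T.Connected) (hAcyclic : T.IsAcyclic) :
    ∃ C : List ((u : V) × (v : V) × T.Walk u v),
      IsPathDecomposition T C ∧ C.length ≤ (Fintype.card V + 1) / 2 := by
  obtain ⟨C, hdec, hnodup⟩ :=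
    GallaiTreeAux.aux (Fintype.card V) V T le_rfl hConn hAcyclic
  refine ⟨C, hdec, ?_⟩
  have hlen := GallaiTreeAux.flatMap_pair_length (fun p => p.1) (fun p => p.2.1) C
  have hle : (C.flatMap (fun p => [p.1, p.2.1])).length ≤ Fintype.card V :=
    hnodup.length_le_card
  rw [hlen] at hle
  omega
end

section
/- Every finite simple connected graph G with e edges admits a decomposition of its edge set into at most ⌊(e+2)/2⌋ edge-disjoint paths. -/
open SimpleGraph

set_option linter.unusedSectionVars false

section Aux

variable {V : Type*} [DecidableEq V]

def RIn (s : Finset (Sym2 V)) (x y : V) : Prop :=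
  (SimpleGraph.fromEdgeSet (↑s : Set (Sym2 V))).Reachable x y

def VIn (s : Finset (Sym2 V)) (x : V) : Prop := ∃ e ∈ s, x ∈ e

def ConnOn (s : Finset (Sym2 V)) : Prop := ∀ x y, VIn s x → VIn s y → RIn s x y

lemma walk_edges_mem {s : Finset (Sym2 V)} {x y : V}
    (W : (fromEdgeSet (↑s : Set (Sym2 V))).Walk x y) {e : Sym2 V} (he : e ∈ W.edges) :
    e ∈ s := by
  have h := W.edges_subset_edgeSet he
  rw [edgeSet_fromEdgeSet] at h
  exact_mod_cast h.1

lemma rin_of_walk {s u : Finset (Sym2 V)} {x y : V}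
    (W : (fromEdgeSet (↑s : Set (Sym2 V))).Walk x y)
    (h : ∀ e ∈ W.edges, e ∈ u) : RIn u x y := by
  induction W with
  | nil => exact Reachable.refl _
  | @cons a b c hab p ih =>
    have hadj : (fromEdgeSet (↑u : Set (Sym2 V))).Adj a b := by
      rw [fromEdgeSet_adj]
      refine ⟨by exact_mod_cast h _ (by simp), ((fromEdgeSet_adj _).1 hab).2⟩
    exact hadj.reachable.trans (ih (fun e he => h e (by simp [he])))

lemma rin_mono {s u : Finset (Sym2 V)} (hsu : s ⊆ u) {x y : V} (h : RIn s x y) :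
    RIn u x y := by
  obtain ⟨W⟩ := h
  exact rin_of_walk W (fun e he => hsu (walk_edges_mem W he))

lemma rin_erase_cases {s : Finset (Sym2 V)} {g : Sym2 V} {a b x y : V} (hg : g = s(a, b))
    (W : (fromEdgeSet (↑s : Set (Sym2 V))).Walk x y) :
    RIn (s.erase g) x y ∨ RIn (s.erase g) x a ∨ RIn (s.erase g) x b := by
  induction W with
  | nil => exact Or.inl (Reachable.refl _)
  | @cons c d w hcd p ih =>
    by_cases he : s(c, d) = g
    · rw [hg, Sym2.eq_iff] at he
      rcases he with ⟨rfl, rfl⟩ | ⟨rfl, rfl⟩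
      · exact Or.inr (Or.inl (Reachable.refl _))
      · exact Or.inr (Or.inr (Reachable.refl _))
    · have hadj : (fromEdgeSet (↑(s.erase g) : Set (Sym2 V))).Adj c d := by
        rw [fromEdgeSet_adj]
        have := (fromEdgeSet_adj _).1 hcd
        exact ⟨by simpa [Finset.mem_erase, he] using this.1, this.2⟩
      rcases ih with h | h | h
      · exact Or.inl (hadj.reachable.trans h)
      · exact Or.inr (Or.inl (hadj.reachable.trans h))
      · exact Or.inr (Or.inr (hadj.reachable.trans h))

open Classical in
/-- The edges of `t` with an endpoint reaching `a` within `t`. -/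

lemma two_mem_eq {e : Sym2 V} {x z : V} (hx : x ∈ e) (hz : z ∈ e) (hxz : x ≠ z) :
    e = s(x, z) := by
  induction e using Sym2.ind with
  | _ c d =>
    rw [Sym2.mem_iff] at hx hz
    rcases hx with rfl | rfl <;> rcases hz with rfl | rfl
    · exact absurd rfl hxz
    · rfl
    · exact Sym2.eq_swap
    · exact absurd rfl hxz

open Classical in
/-- The edges of `t` with an endpoint reaching `a` within `t`. -/
noncomputable def comp (t : Finset (Sym2 V)) (a : V) : Finset (Sym2 V) :=
  t.filter (fun e => ∃ x ∈ e, RIn t x a)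

lemma comp_subset (t : Finset (Sym2 V)) (a : V) : comp t a ⊆ t := by
  classical exact Finset.filter_subset _ _

lemma mem_comp {t : Finset (Sym2 V)} {a : V} {e : Sym2 V} :
    e ∈ comp t a ↔ e ∈ t ∧ ∃ x ∈ e, RIn t x a := by
  classical simp [comp]

lemma reach_step {t : Finset (Sym2 V)} {e : Sym2 V} (het : e ∈ t) {x z y : V}
    (hx : x ∈ e) (hz : z ∈ e) (h : RIn t z y) : RIn t x y := by
  by_cases hxz : x = z
  · exact hxz ▸ h
  · have hadj : (fromEdgeSet (↑t : Set (Sym2 V))).Adj x z := by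
      rw [fromEdgeSet_adj]
      exact ⟨by exact_mod_cast (two_mem_eq hx hz hxz) ▸ het, hxz⟩
    exact hadj.reachable.trans h

lemma comp_vert_reaches {t : Finset (Sym2 V)} {a : V} {e : Sym2 V}
    (he : e ∈ comp t a) {x : V} (hx : x ∈ e) : RIn t x a := by
  rcases mem_comp.1 he with ⟨het, z, hz, hza⟩
  exact reach_step het hx hz hza

/-- edges of a walk (in t) ending at `a` all lie in `comp t a`. -/
lemma walk_edges_comp {t : Finset (Sym2 V)} {a x : V}
    (W : (fromEdgeSet (↑t : Set (Sym2 V))).Walk x a) :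
    ∀ e ∈ W.edges, e ∈ comp t a := by
  intro e he
  induction e using Sym2.ind with
  | _ c d =>
    have hc : c ∈ W.support := W.fst_mem_support_of_mem_edges he
    have : RIn t c a := ⟨(W.dropUntil c hc).mapLe (by
      exact le_refl _)⟩
    exact mem_comp.2 ⟨walk_edges_mem W he, c, by simp, this⟩

/-- vertices of `comp t a` reach `a` inside `comp t a`. -/
lemma comp_conn_aux {t : Finset (Sym2 V)} {a x : V} (h : VIn (comp t a) x) :
    RIn (comp t a) x a := by
  rcases h with ⟨e, he, hx⟩
  obtain ⟨W⟩ := comp_vert_reaches he hx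
  exact rin_of_walk W (walk_edges_comp W)

lemma comp_conn (t : Finset (Sym2 V)) (a : V) : ConnOn (comp t a) := by
  intro x y hx hy
  exact (comp_conn_aux hx).trans (comp_conn_aux hy).symm

lemma comp_supp {t : Finset (Sym2 V)} {a : V} (h : (comp t a).Nonempty) :
    ∃ e ∈ comp t a, a ∈ e := by
  rcases h with ⟨e, he⟩
  have hx : ∃ x, x ∈ e := by induction e using Sym2.ind with | _ c d => exact ⟨c, by simp⟩
  rcases hx with ⟨x, hx⟩
  obtain ⟨W⟩ := (comp_conn_aux ⟨e, he, hx⟩).symm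
  cases W with
  | nil => exact ⟨e, he, hx⟩
  | @cons _ z _ hadj p =>
    exact ⟨s(a, z), walk_edges_mem (SimpleGraph.Walk.cons hadj p) (by simp), by simp⟩

lemma vin_target {u : Finset (Sym2 V)} {x b : V} (hx : VIn u x) (h : RIn u x b) :
    ∃ e ∈ u, b ∈ e := by
  rcases hx with ⟨e, he, hxe⟩
  obtain ⟨W⟩ := h.symm
  cases W with
  | nil => exact ⟨e, he, hxe⟩
  | @cons _ z _ hadj p =>
    exact ⟨s(b, z), walk_edges_mem (SimpleGraph.Walk.cons hadj p) (by simp), by simp⟩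

section Bside

variable {s : Finset (Sym2 V)} {g : Sym2 V} {a b : V}

lemma bside_reach (hconn : ConnOn s) (hgs : g ∈ s) (hg : g = s(a, b)) {x : V}
    (hx : VIn (s.erase g \ comp (s.erase g) a) x) :
    RIn (s.erase g \ comp (s.erase g) a) x b := by
  set t := s.erase g with ht
  rcases hx with ⟨e, he, hxe⟩
  rcases Finset.mem_sdiff.1 he with ⟨het, heA⟩
  have hxa : ¬ RIn t x a := fun h => heA (mem_comp.2 ⟨het, x, hxe, h⟩)
  have hxs : VIn s x := ⟨e, Finset.erase_subset _ _ het, hxe⟩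
  have has : VIn s a := ⟨g, hgs, by rw [hg]; simp⟩
  obtain ⟨W⟩ := hconn x a hxs has
  have hxb : RIn t x b := by
    rcases rin_erase_cases hg W with h | h | h
    · exact absurd h hxa
    · exact absurd h hxa
    · exact h
  obtain ⟨W'⟩ := hxb
  refine rin_of_walk W' (fun e' he' => Finset.mem_sdiff.2 ⟨walk_edges_mem W' he', ?_⟩)
  intro he'A
  apply hxa
  induction e' using Sym2.ind with
  | _ c d =>
    have hc : c ∈ W'.support := W'.fst_mem_support_of_mem_edges he'
    have hxc : RIn t x c := ⟨W'.takeUntil c hc⟩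
    exact hxc.trans (comp_vert_reaches he'A (by simp))

lemma bside_conn (hconn : ConnOn s) (hgs : g ∈ s) (hg : g = s(a, b)) :
    ConnOn (s.erase g \ comp (s.erase g) a) := by
  intro x y hx hy
  exact (bside_reach hconn hgs hg hx).trans (bside_reach hconn hgs hg hy).symm

lemma bside_supp (hconn : ConnOn s) (hgs : g ∈ s) (hg : g = s(a, b))
    (h : (s.erase g \ comp (s.erase g) a).Nonempty) :
    ∃ e ∈ s.erase g \ comp (s.erase g) a, b ∈ e := by
  rcases h with ⟨e, he⟩
  have hx : ∃ x, x ∈ e := by induction e using Sym2.ind with | _ c d => exact ⟨c, by simp⟩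
  rcases hx with ⟨x, hxe⟩
  exact vin_target ⟨e, he, hxe⟩ (bside_reach hconn hgs hg ⟨e, he, hxe⟩)

lemma split_data (hconn : ConnOn s) (hgs : g ∈ s) (hg : g = s(a, b)) :
    ∃ A B : Finset (Sym2 V),
      A ∪ B = s.erase g ∧ Disjoint A B ∧ ConnOn A ∧ ConnOn B ∧
      (A.Nonempty → ∃ e ∈ A, a ∈ e) ∧ (B.Nonempty → ∃ e ∈ B, b ∈ e) ∧
      A.card + B.card + 1 = s.card := by
  refine ⟨comp (s.erase g) a, s.erase g \ comp (s.erase g) a,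
    Finset.union_sdiff_of_subset (comp_subset _ _), Finset.disjoint_sdiff,
    comp_conn _ _, bside_conn hconn hgs hg, comp_supp, bside_supp hconn hgs hg, ?_⟩
  have h1 : (comp (s.erase g) a).card + (s.erase g \ comp (s.erase g) a).card
      = (s.erase g).card := by
    rw [← Finset.card_union_of_disjoint Finset.disjoint_sdiff,
      Finset.union_sdiff_of_subset (comp_subset _ _)]
  rw [h1, Finset.card_erase_of_mem hgs]
  have := Finset.card_pos.2 ⟨g, hgs⟩
  omega

def flatL (L : List (Sym2 V × Sym2 V)) : List (Sym2 V) := L.flatMap (fun p => [p.1, p.2])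

def Covers (L : List (Sym2 V × Sym2 V)) (u : Finset (Sym2 V)) : Prop :=
  (flatL L).Nodup ∧ ∀ e, e ∈ flatL L ↔ e ∈ u

def IsPairing (L : List (Sym2 V × Sym2 V)) : Prop :=
  ∀ p ∈ L, p.1 ≠ p.2 ∧ ∃ w, w ∈ p.1 ∧ w ∈ p.2

lemma flatL_append (L L' : List (Sym2 V × Sym2 V)) :
    flatL (L ++ L') = flatL L ++ flatL L' := by
  simp [flatL]

lemma flatL_cons (p : Sym2 V × Sym2 V) (L : List (Sym2 V × Sym2 V)) :
    flatL (p :: L) = p.1 :: p.2 :: flatL L := by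
  simp [flatL]

lemma covers_nil : Covers ([] : List (Sym2 V × Sym2 V)) ∅ := by
  constructor
  · simp [flatL]
  · simp [flatL]

lemma covers_append {L L' : List (Sym2 V × Sym2 V)} {u u' : Finset (Sym2 V)}
    (h : Covers L u) (h' : Covers L' u') (hd : Disjoint u u') :
    Covers (L ++ L') (u ∪ u') := by
  rcases h with ⟨hn, hm⟩
  rcases h' with ⟨hn', hm'⟩
  constructor
  · rw [flatL_append, List.nodup_append]
    exact ⟨hn, hn', fun e he e' he' hee =>
      Finset.disjoint_left.1 hd ((hm e).1 he) ((hm' e).1 (by subst hee; exact he'))⟩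
  · intro e
    rw [flatL_append, List.mem_append, Finset.mem_union, hm, hm']

lemma covers_cons {L : List (Sym2 V × Sym2 V)} {u : Finset (Sym2 V)} {g f : Sym2 V}
    (h : Covers L u) (hg : g ∉ u) (hf : f ∉ u) (hgf : g ≠ f) :
    Covers ((g, f) :: L) (insert g (insert f u)) := by
  rcases h with ⟨hn, hm⟩
  constructor
  · rw [flatL_cons]
    refine List.Nodup.cons ?_ (List.Nodup.cons ?_ hn)
    · simp only [List.mem_cons]
      rintro (rfl | hh)
      · exact hgf rfl
      · exact hg ((hm g).1 hh)
    · intro hh; exact hf ((hm f).1 hh)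
  · intro e
    rw [flatL_cons]
    simp only [List.mem_cons, Finset.mem_insert, hm]

lemma pairing_append {L L' : List (Sym2 V × Sym2 V)} (h : IsPairing L) (h' : IsPairing L') :
    IsPairing (L ++ L') := by
  intro p hp
  rcases List.mem_append.1 hp with hh | hh
  · exact h p hh
  · exact h' p hh

lemma main_pairing : ∀ (n : ℕ) (s : Finset (Sym2 V)), s.card = n →
    (∀ e ∈ s, ¬e.IsDiag) → ConnOn s →
    ((Even n → ∃ L, IsPairing L ∧ Covers L s) ∧
     (Odd n → ∀ r, VIn s r →
        ∃ f L, f ∈ s ∧ r ∈ f ∧ IsPairing L ∧ Covers L (s.erase f))) := by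
  intro n
  induction n using Nat.strong_induction_on with
  | _ n IH =>
  intro s hcard hdiag hconn
  constructor
  · -- even case
    intro hev
    by_cases hn0 : n = 0
    · subst hn0
      rw [Finset.card_eq_zero] at hcard; subst hcard
      exact ⟨[], fun p hp => absurd hp (by simp), covers_nil⟩
    · obtain ⟨g, hgs⟩ : s.Nonempty := Finset.card_pos.1 (by omega)
      obtain ⟨a, b, hg⟩ : ∃ a b, g = s(a, b) := by
        induction g using Sym2.ind with | _ c d => exact ⟨c, d, rfl⟩
      obtain ⟨A, B, hUn, hdisj, hcA, hcB, hsA, hsB, hcards⟩ := split_data hconn hgs hg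
      have hAe : A ⊆ s.erase g := by rw [← hUn]; exact Finset.subset_union_left
      have hBe : B ⊆ s.erase g := by rw [← hUn]; exact Finset.subset_union_right
      have hAsub : A ⊆ s := hAe.trans (Finset.erase_subset _ _)
      have hBsub : B ⊆ s := hBe.trans (Finset.erase_subset _ _)
      have hdA : ∀ e ∈ A, ¬e.IsDiag := fun e he => hdiag e (hAsub he)
      have hdB : ∀ e ∈ B, ¬e.IsDiag := fun e he => hdiag e (hBsub he)
      rw [hcard] at hcards
      have hltA : A.card < n := by omega
      have hltB : B.card < n := by omega
      rcases Nat.even_or_odd A.card with hpA | hpA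
      · -- A even, B odd
        have hpB : Odd B.card := by
          rw [Nat.even_iff] at hev hpA; rw [Nat.odd_iff]; omega
        obtain ⟨LA, hLAp, hLAc⟩ := (IH A.card hltA A rfl hdA hcA).1 hpA
        have hBne : B.Nonempty := Finset.card_pos.1 (by rw [Nat.odd_iff] at hpB; omega)
        obtain ⟨eb, hebB, hbeb⟩ := hsB hBne
        obtain ⟨fB, LB, hfB, hbfB, hLBp, hLBc⟩ :=
          (IH B.card hltB B rfl hdB hcB).2 hpB b ⟨eb, hebB, hbeb⟩
        have hfBg : fB ≠ g := (Finset.mem_erase.1 (hBe hfB)).1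
        have hcov : Covers (LA ++ LB) (A ∪ B.erase fB) :=
          covers_append hLAc hLBc (hdisj.mono_right (Finset.erase_subset _ _))
        have hgnot : g ∉ A ∪ B.erase fB := by
          intro h
          rcases Finset.mem_union.1 h with h | h
          · exact Finset.notMem_erase g s (hAe h)
          · exact Finset.notMem_erase g s (hBe (Finset.erase_subset _ _ h))
        have hfnot : fB ∉ A ∪ B.erase fB := by
          intro h
          rcases Finset.mem_union.1 h with h | h
          · exact Finset.disjoint_left.1 hdisj h hfB
          · exact Finset.notMem_erase fB B h
        have hcov2 := covers_cons hcov hgnot hfnot hfBg.symm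
        have heq : insert g (insert fB (A ∪ B.erase fB)) = s := by
          rw [← Finset.union_insert, Finset.insert_erase hfB, hUn, Finset.insert_erase hgs]
        rw [heq] at hcov2
        refine ⟨(g, fB) :: (LA ++ LB), ?_, hcov2⟩
        intro p hp
        rcases List.mem_cons.1 hp with rfl | hp'
        · exact ⟨hfBg.symm, b, by rw [hg]; simp, hbfB⟩
        · exact pairing_append hLAp hLBp p hp'
      · -- A odd, B even
        have hpB : Even B.card := by
          rw [Nat.even_iff] at hev ⊢; rw [Nat.odd_iff] at hpA; omega
        obtain ⟨LB, hLBp, hLBc⟩ := (IH B.card hltB B rfl hdB hcB).1 hpB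
        have hAne : A.Nonempty := Finset.card_pos.1 (by rw [Nat.odd_iff] at hpA; omega)
        obtain ⟨ea, heaA, haea⟩ := hsA hAne
        obtain ⟨fA, LA, hfA, hafA, hLAp, hLAc⟩ :=
          (IH A.card hltA A rfl hdA hcA).2 hpA a ⟨ea, heaA, haea⟩
        have hfAg : fA ≠ g := (Finset.mem_erase.1 (hAe hfA)).1
        have hcov : Covers (LA ++ LB) (A.erase fA ∪ B) :=
          covers_append hLAc hLBc (hdisj.mono_left (Finset.erase_subset _ _))
        have hgnot : g ∉ A.erase fA ∪ B := by
          intro h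
          rcases Finset.mem_union.1 h with h | h
          · exact Finset.notMem_erase g s (hAe (Finset.erase_subset _ _ h))
          · exact Finset.notMem_erase g s (hBe h)
        have hfnot : fA ∉ A.erase fA ∪ B := by
          intro h
          rcases Finset.mem_union.1 h with h | h
          · exact Finset.notMem_erase fA A h
          · exact Finset.disjoint_left.1 hdisj hfA h
        have hcov2 := covers_cons hcov hgnot hfnot hfAg.symm
        have heq : insert g (insert fA (A.erase fA ∪ B)) = s := by
          rw [← Finset.insert_union, Finset.insert_erase hfA, hUn, Finset.insert_erase hgs]
        rw [heq] at hcov2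
        refine ⟨(g, fA) :: (LA ++ LB), ?_, hcov2⟩
        intro p hp
        rcases List.mem_cons.1 hp with rfl | hp'
        · exact ⟨hfAg.symm, a, by rw [hg]; simp, hafA⟩
        · exact pairing_append hLAp hLBp p hp'
  · -- odd case
    intro hodd r hrV
    obtain ⟨g, hgs, hrg⟩ := hrV
    obtain ⟨b, hg⟩ := Sym2.mem_iff_exists.1 hrg
    obtain ⟨A, B, hUn, hdisj, hcA, hcB, hsA, hsB, hcards⟩ := split_data hconn hgs hg
    have hAe : A ⊆ s.erase g := by rw [← hUn]; exact Finset.subset_union_left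
    have hBe : B ⊆ s.erase g := by rw [← hUn]; exact Finset.subset_union_right
    have hAsub : A ⊆ s := hAe.trans (Finset.erase_subset _ _)
    have hBsub : B ⊆ s := hBe.trans (Finset.erase_subset _ _)
    have hdA : ∀ e ∈ A, ¬e.IsDiag := fun e he => hdiag e (hAsub he)
    have hdB : ∀ e ∈ B, ¬e.IsDiag := fun e he => hdiag e (hBsub he)
    rw [hcard] at hcards
    have hltA : A.card < n := by omega
    have hltB : B.card < n := by omega
    rcases Nat.even_or_odd A.card with hpA | hpA
    · -- both even: leftover is g itself
      have hpB : Even B.card := by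
        rw [Nat.odd_iff] at hodd; rw [Nat.even_iff] at hpA ⊢; omega
      obtain ⟨LA, hLAp, hLAc⟩ := (IH A.card hltA A rfl hdA hcA).1 hpA
      obtain ⟨LB, hLBp, hLBc⟩ := (IH B.card hltB B rfl hdB hcB).1 hpB
      have hcov := covers_append hLAc hLBc hdisj
      rw [hUn] at hcov
      exact ⟨g, LA ++ LB, hgs, hrg, pairing_append hLAp hLBp, hcov⟩
    · -- both odd
      have hpB : Odd B.card := by
        rw [Nat.odd_iff] at hodd hpA ⊢; omega
      have hAne : A.Nonempty := Finset.card_pos.1 (by rw [Nat.odd_iff] at hpA; omega)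
      have hBne : B.Nonempty := Finset.card_pos.1 (by rw [Nat.odd_iff] at hpB; omega)
      obtain ⟨ea, heaA, haea⟩ := hsA hAne
      obtain ⟨eb, hebB, hbeb⟩ := hsB hBne
      obtain ⟨fA, LA, hfA, hrfA, hLAp, hLAc⟩ :=
        (IH A.card hltA A rfl hdA hcA).2 hpA r ⟨ea, heaA, haea⟩
      obtain ⟨fB, LB, hfB, hbfB, hLBp, hLBc⟩ :=
        (IH B.card hltB B rfl hdB hcB).2 hpB b ⟨eb, hebB, hbeb⟩
      have hfAg : fA ≠ g := (Finset.mem_erase.1 (hAe hfA)).1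
      have hfBg : fB ≠ g := (Finset.mem_erase.1 (hBe hfB)).1
      have hcov : Covers (LA ++ LB) (A.erase fA ∪ B.erase fB) :=
        covers_append hLAc hLBc
          (hdisj.mono (Finset.erase_subset _ _) (Finset.erase_subset _ _))
      have hgnot : g ∉ A.erase fA ∪ B.erase fB := by
        intro h
        rcases Finset.mem_union.1 h with h | h
        · exact Finset.notMem_erase g s (hAe (Finset.erase_subset _ _ h))
        · exact Finset.notMem_erase g s (hBe (Finset.erase_subset _ _ h))
      have hfnot : fB ∉ A.erase fA ∪ B.erase fB := by
        intro h
        rcases Finset.mem_union.1 h with h | h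
        · exact Finset.disjoint_left.1 hdisj (Finset.erase_subset _ _ h) hfB
        · exact Finset.notMem_erase fB B h
      have hcov2 := covers_cons hcov hgnot hfnot hfBg.symm
      have heq : insert g (insert fB (A.erase fA ∪ B.erase fB)) = s.erase fA := by
        rw [← Finset.union_insert, Finset.insert_erase hfB]
        have h2 : A.erase fA ∪ B = (s.erase g).erase fA := by
          rw [← hUn, Finset.erase_union_distrib,
            Finset.erase_eq_of_notMem (Finset.disjoint_left.1 hdisj hfA)]
        rw [h2]
        ext e
        simp only [Finset.mem_insert, Finset.mem_erase]
        constructor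
        · rintro (rfl | ⟨hef, _, hes⟩)
          · exact ⟨hfAg.symm, hgs⟩
          · exact ⟨hef, hes⟩
        · rintro ⟨hef, hes⟩
          by_cases heg : e = g
          · exact Or.inl heg
          · exact Or.inr ⟨hef, heg, hes⟩
      rw [heq] at hcov2
      refine ⟨fA, (g, fB) :: (LA ++ LB), hAsub hfA, hrfA, ?_, hcov2⟩
      intro p hp
      rcases List.mem_cons.1 hp with rfl | hp'
      · exact ⟨hfBg.symm, b, by rw [hg]; simp, hbfB⟩
      · exact pairing_append hLAp hLBp p hp'

section Build

variable {G : SimpleGraph V}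

lemma flatL_length (L : List (Sym2 V × Sym2 V)) : (flatL L).length = 2 * L.length := by
  induction L with
  | nil => simp [flatL]
  | cons p L ih => rw [flatL_cons]; simp only [List.length_cons, ih]; ring

lemma build (L : List (Sym2 V × Sym2 V)) (hp : IsPairing L)
    (hs : ∀ e ∈ flatL L, e ∈ G.edgeSet) :
    ∃ C : List ((u : V) × (v : V) × G.Walk u v),
      (∀ p ∈ C, p.2.2.IsPath) ∧
      List.Forall₂ (fun p pr => p.2.2.edges = [pr.1, pr.2]) C L := by
  induction L with
  | nil => exact ⟨[], by simp, List.Forall₂.nil⟩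
  | cons pr L ih =>
    obtain ⟨C', hC'p, hC'F⟩ := ih (fun p hp' => hp p (List.mem_cons_of_mem _ hp'))
      (fun e he => hs e (by rw [flatL_cons]; simp [he]))
    obtain ⟨hne, w, hw1, hw2⟩ := hp pr (List.mem_cons_self)
    obtain ⟨x, he⟩ := Sym2.mem_iff_exists.1 hw1
    obtain ⟨y, hf⟩ := Sym2.mem_iff_exists.1 hw2
    have h1 : pr.1 ∈ G.edgeSet := hs _ (by rw [flatL_cons]; simp)
    have h2 : pr.2 ∈ G.edgeSet := hs _ (by rw [flatL_cons]; simp)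
    have hwx : G.Adj w x := G.mem_edgeSet.1 (he ▸ h1)
    have hwy : G.Adj w y := G.mem_edgeSet.1 (hf ▸ h2)
    have hxy : x ≠ y := by rintro rfl; exact hne (he.trans hf.symm)
    refine ⟨⟨x, y, SimpleGraph.Walk.cons hwx.symm (SimpleGraph.Walk.cons hwy .nil)⟩ :: C',
      ?_, List.Forall₂.cons ?_ hC'F⟩
    · intro p hpc
      rcases List.mem_cons.1 hpc with rfl | hpc'
      · rw [SimpleGraph.Walk.isPath_def]
        simp [hxy, hwx.ne', hwy.ne, Ne.symm hwx.ne']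
      · exact hC'p p hpc'
    · show (SimpleGraph.Walk.cons hwx.symm (SimpleGraph.Walk.cons hwy .nil)).edges = _
      simp only [SimpleGraph.Walk.edges_cons, SimpleGraph.Walk.edges_nil]
      rw [he, hf, Sym2.eq_swap]

lemma mem_flat_of_mem_edges {C : List ((u : V) × (v : V) × G.Walk u v)}
    {L : List (Sym2 V × Sym2 V)}
    (hF : List.Forall₂ (fun p pr => p.2.2.edges = [pr.1, pr.2]) C L) :
    ∀ q ∈ C, ∀ x ∈ q.2.2.edges, x ∈ flatL L := by
  induction hF with
  | nil => simp
  | @cons p pr C' L' hR _ ih =>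
    intro q hq x hx
    rw [flatL_cons]
    rcases List.mem_cons.1 hq with rfl | hq'
    · rw [hR] at hx
      rcases List.mem_cons.1 hx with rfl | hx'
      · simp
      · simp at hx'; simp [hx']
    · simp only [List.mem_cons]
      exact Or.inr (Or.inr (ih q hq' x hx))

lemma exists_of_mem_flat {C : List ((u : V) × (v : V) × G.Walk u v)}
    {L : List (Sym2 V × Sym2 V)}
    (hF : List.Forall₂ (fun p pr => p.2.2.edges = [pr.1, pr.2]) C L) :
    ∀ x ∈ flatL L, ∃ q ∈ C, x ∈ q.2.2.edges := by
  induction hF with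
  | nil => simp [flatL]
  | @cons p pr C' L' hR _ ih =>
    intro x hx
    rw [flatL_cons] at hx
    rcases List.mem_cons.1 hx with rfl | hx'
    · exact ⟨p, List.mem_cons_self, by rw [hR]; simp⟩
    · rcases List.mem_cons.1 hx' with rfl | hx''
      · exact ⟨p, List.mem_cons_self, by rw [hR]; simp⟩
      · obtain ⟨q, hq, hxq⟩ := ih x hx''
        exact ⟨q, List.mem_cons_of_mem _ hq, hxq⟩

lemma pairwise_of_forall₂ {C : List ((u : V) × (v : V) × G.Walk u v)}
    {L : List (Sym2 V × Sym2 V)}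
    (hF : List.Forall₂ (fun p pr => p.2.2.edges = [pr.1, pr.2]) C L)
    (hN : (flatL L).Nodup) :
    C.Pairwise (fun p q => ∀ e, e ∈ p.2.2.edges → e ∉ q.2.2.edges) := by
  induction hF with
  | nil => exact List.Pairwise.nil
  | @cons p pr C' L' hR hF' ih =>
    rw [flatL_cons] at hN
    rcases List.nodup_cons.1 hN with ⟨h1, hN'⟩
    rcases List.nodup_cons.1 hN' with ⟨h2, hN''⟩
    refine List.Pairwise.cons ?_ (ih hN'')
    intro q hq e he heq
    have hem : e ∈ flatL L' := mem_flat_of_mem_edges hF' q hq e heq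
    rw [hR] at he
    rcases List.mem_cons.1 he with rfl | he'
    · exact h1 (List.mem_cons_of_mem _ hem)
    · simp only [List.mem_cons, List.not_mem_nil, or_false] at he'
      subst he'
      exact h2 hem

end Build

lemma covers_length {L : List (Sym2 V × Sym2 V)} {u : Finset (Sym2 V)} (h : Covers L u) :
    (flatL L).length = u.card := by
  have ht : (flatL L).toFinset = u := by
    ext e; rw [List.mem_toFinset]; exact h.2 e
  rw [← ht, List.toFinset_card_of_nodup h.1]


end Bside
end Aux

/-- Every finite simple connected graph with `e` edges admits a decomposition of
its edge set into at most `⌊(e+2)/2⌋` edge-disjoint paths. -/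
theorem path_decomposition_edge_bound
    {V : Type*} [Fintype V] [DecidableEq V] (G : SimpleGraph V) [DecidableRel G.Adj]
    (hG : G.Connected) :
    ∃ C : List ((u : V) × (v : V) × G.Walk u v),
      IsPathDecomposition G C ∧ C.length ≤ (G.edgeFinset.card + 2) / 2 := by
  classical
  have hconn : ConnOn G.edgeFinset := by
    intro x y _ _
    show (fromEdgeSet (↑G.edgeFinset : Set (Sym2 V))).Reachable x y
    rw [coe_edgeFinset, fromEdgeSet_edgeSet]
    exact hG.preconnected x y
  have hdiag : ∀ e ∈ G.edgeFinset, ¬e.IsDiag := fun e he =>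
    G.not_isDiag_of_mem_edgeSet (mem_edgeFinset.1 he)
  rcases Nat.even_or_odd G.edgeFinset.card with hev | hodd
  · obtain ⟨L, hLp, hLc⟩ := (main_pairing G.edgeFinset.card G.edgeFinset rfl hdiag hconn).1 hev
    have hedge : ∀ e ∈ flatL L, e ∈ G.edgeSet := fun e he =>
      mem_edgeFinset.1 ((hLc.2 e).1 he)
    obtain ⟨C, hCp, hCF⟩ := build L hLp hedge
    have hlen : (flatL L).length = G.edgeFinset.card := covers_length hLc
    rw [flatL_length] at hlen
    have hlen2 : C.length = L.length := hCF.length_eq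
    refine ⟨C, ⟨hCp, pairwise_of_forall₂ hCF hLc.1, ?_⟩, by omega⟩
    intro e
    constructor
    · intro he
      exact exists_of_mem_flat hCF e ((hLc.2 e).2 (mem_edgeFinset.2 he))
    · rintro ⟨p, hp, hep⟩
      exact p.2.2.edges_subset_edgeSet hep
  · have hne : G.edgeFinset.Nonempty := Finset.card_pos.1 (by rw [Nat.odd_iff] at hodd; omega)
    obtain ⟨g0, hg0⟩ := hne
    obtain ⟨r, hr⟩ : ∃ r, r ∈ g0 := by
      induction g0 using Sym2.ind with | _ c d => exact ⟨c, by simp⟩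
    obtain ⟨f, L, hfs, hrf, hLp, hLc⟩ :=
      (main_pairing G.edgeFinset.card G.edgeFinset rfl hdiag hconn).2 hodd r ⟨g0, hg0, hr⟩
    obtain ⟨x, hfx⟩ := Sym2.mem_iff_exists.1 hrf
    have hadj : G.Adj r x := G.mem_edgeSet.1 (hfx ▸ mem_edgeFinset.1 hfs)
    have hedge : ∀ e ∈ flatL L, e ∈ G.edgeSet := fun e he =>
      mem_edgeFinset.1 (Finset.erase_subset _ _ ((hLc.2 e).1 he))
    obtain ⟨C, hCp, hCF⟩ := build L hLp hedge
    have hw0e : (SimpleGraph.Walk.cons hadj .nil : G.Walk r x).edges = [f] := by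
      simp [hfx]
    refine ⟨⟨r, x, SimpleGraph.Walk.cons hadj .nil⟩ :: C, ⟨?_, ?_, ?_⟩, ?_⟩
    · intro p hp
      rcases List.mem_cons.1 hp with rfl | hp'
      · rw [SimpleGraph.Walk.isPath_def]
        simp [hadj.ne]
      · exact hCp p hp'
    · refine List.Pairwise.cons ?_ (pairwise_of_forall₂ hCF hLc.1)
      intro q hq e he heq
      rw [hw0e] at he
      simp only [List.mem_cons, List.not_mem_nil, or_false] at he
      rw [he] at heq
      exact Finset.notMem_erase f G.edgeFinset
        ((hLc.2 f).1 (mem_flat_of_mem_edges hCF q hq f heq))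
    · intro e
      constructor
      · intro he
        by_cases hef : e = f
        · exact ⟨⟨r, x, SimpleGraph.Walk.cons hadj .nil⟩, List.mem_cons_self,
            by rw [hw0e, hef]; simp⟩
        · have hee : e ∈ G.edgeFinset.erase f := Finset.mem_erase.2 ⟨hef, mem_edgeFinset.2 he⟩
          obtain ⟨q, hq, hqe⟩ := exists_of_mem_flat hCF e ((hLc.2 e).2 hee)
          exact ⟨q, List.mem_cons_of_mem _ hq, hqe⟩
      · rintro ⟨p, hp, hep⟩
        exact p.2.2.edges_subset_edgeSet hep
    · have h1 : C.length = L.length := hCF.length_eq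
      have h2 : (flatL L).length = (G.edgeFinset.erase f).card := covers_length hLc
      rw [flatL_length, Finset.card_erase_of_mem hfs] at h2
      have h3 : 1 ≤ G.edgeFinset.card := Finset.card_pos.2 ⟨f, hfs⟩
      simp only [List.length_cons]
      omega
end

section
/- Let T be a finite tree. If T has n = 2k vertices (k ≥ 1), then the edge set of T can be decomposed into (k − 1) edge-disjoint paths of length two together with one path of length one. If T has n = 2k − 1 vertices (k ≥ 2), then the edge set of T can be decomposed into (k − 2) edge-disjoint paths of length two together with two paths of length one. -/
open SimpleGraph

namespace BPDAux

open SimpleGraph Walk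

attribute [local instance] Classical.propDecidable

variable {V : Type*}

/-- An interior vertex of a path has two distinct neighbors on the path. -/
lemma interior_two_neighbors {G : SimpleGraph V} {u v c : V} {p : G.Walk u v}
    (hp : p.IsPath) (hc : c ∈ p.support) (hcu : c ≠ u) (hcv : c ≠ v) :
    ∃ y₁ y₂, G.Adj c y₁ ∧ G.Adj c y₂ ∧ y₁ ≠ y₂ ∧ y₁ ∈ p.support ∧ y₂ ∈ p.support := by
  classical
  obtain ⟨y₂, h₂, r, hr⟩ := (p.dropUntil c hc).exists_eq_cons_of_ne hcv
  obtain ⟨y₁, h₁, r₁, hr₁⟩ := (p.takeUntil c hc).reverse.exists_eq_cons_of_ne hcu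
  have hy₁mem : y₁ ∈ (p.takeUntil c hc).support := by
    have : y₁ ∈ (p.takeUntil c hc).reverse.support := by
      rw [hr₁]; simp [support_cons]
    simpa [support_reverse] using this
  have hy₂tail : y₂ ∈ (p.dropUntil c hc).support.tail := by
    rw [hr]; simp [support_cons]
  have hsp : p.support = (p.takeUntil c hc).support ++ (p.dropUntil c hc).support.tail := by
    conv_lhs => rw [← p.take_spec hc]
    exact support_append _ _
  have hnd := hp.support_nodup
  rw [hsp] at hnd
  have hdisj := List.disjoint_of_nodup_append hnd
  refine ⟨y₁, y₂, h₁, h₂, ?_, ?_, ?_⟩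
  · intro he; exact hdisj hy₁mem (he ▸ hy₂tail)
  · exact p.support_takeUntil_subset hc hy₁mem
  · exact p.support_dropUntil_subset hc (List.mem_of_mem_tail hy₂tail)

/-- A path between two vertices different from a leaf `a` avoids `a`. -/
lemma leaf_avoid {G : SimpleGraph V} {a w u v : V} (ha : ∀ z, G.Adj a z → z = w)
    {p : G.Walk u v} (hp : p.IsPath) (hu : u ≠ a) (hv : v ≠ a) : a ∉ p.support := by
  intro hmem
  obtain ⟨y₁, y₂, hy₁, hy₂, hne, -, -⟩ :=
    interior_two_neighbors hp hmem (Ne.symm hu) (Ne.symm hv)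
  exact hne ((ha _ hy₁).trans (ha _ hy₂).symm)

variable {V : Type*}

lemma reachable_induce {G : SimpleGraph V} {s : Set V} :
    ∀ {u v : V} (p : G.Walk u v) (_ : ∀ x ∈ p.support, x ∈ s) (hu : u ∈ s) (hv : v ∈ s),
      (G.induce s).Reachable ⟨u, hu⟩ ⟨v, hv⟩ := by
  intro u v p
  induction p with
  | nil => intro _ hu hv; rfl
  | @cons u w v h q ih =>
    intro hs hu hv
    have hw : w ∈ s := hs w (by simp [Walk.support_cons])
    have hadj : (G.induce s).Adj ⟨u, hu⟩ ⟨w, hw⟩ := h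
    exact hadj.reachable.trans (ih (fun x hx => hs x (by simp [Walk.support_cons, hx])) hw hv)

lemma induce_connected {G : SimpleGraph V} (hconn : G.Connected) {s : Set V} (hne : s.Nonempty)
    (H : ∀ u v : V, u ∈ s → v ∈ s → ∃ p : G.Walk u v, ∀ x ∈ p.support, x ∈ s) :
    (G.induce s).Connected := by
  rw [connected_iff]
  refine ⟨?_, ⟨⟨hne.choose, hne.choose_spec⟩⟩⟩
  rintro ⟨u, hu⟩ ⟨v, hv⟩
  obtain ⟨p, hp⟩ := H u v hu hv
  exact reachable_induce p hp hu hv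

lemma induce_acyclic {G : SimpleGraph V} (h : G.IsAcyclic) (s : Set V) :
    (G.induce s).IsAcyclic := by
  rw [isAcyclic_iff_path_unique]
  intro u v p q
  have hinj : Function.Injective ((Embedding.induce s (G := G)).toHom : ↥s → V) :=
    Subtype.val_injective
  have h1 : (p : (G.induce s).Walk u v).map (Embedding.induce s).toHom
      = (q : (G.induce s).Walk u v).map (Embedding.induce s).toHom := by
    have := h.path_unique (p.map (Embedding.induce s).toHom hinj)
      (q.map (Embedding.induce s).toHom hinj)
    exact congrArg Subtype.val this
  have := Walk.map_injective_of_injective hinj u v h1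
  exact Subtype.ext this

lemma card_ne_one [Fintype V] (a : V) :
    Fintype.card {x : V // x ≠ a} = Fintype.card V - 1 := by
  classical
  rw [Fintype.card_subtype_compl, Fintype.card_subtype_eq]

lemma card_ne_two [Fintype V] {a b : V} (hab : a ≠ b) :
    Fintype.card {x : V // x ≠ a ∧ x ≠ b} = Fintype.card V - 2 := by
  classical
  have h1 : Fintype.card {x : V // x ≠ a ∧ x ≠ b}
      = Fintype.card {x : V // ¬(x = a ∨ x = b)} :=
    Fintype.card_congr (Equiv.subtypeEquivRight (by intro x; simp [not_or]))
  rw [h1, Fintype.card_subtype_compl]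
  congr 1
  rw [Fintype.card_subtype]
  have : (Finset.univ.filter fun x => x = a ∨ x = b) = {a, b} := by
    ext x; simp
  rw [this, Finset.card_pair hab]
variable {V : Type*}

lemma exists_max_path [Fintype V] {G : SimpleGraph V} (hconn : G.Connected) :
    ∃ (a b : V) (p : G.Walk a b), p.IsPath ∧
      ∀ (u v : V) (q : G.Walk u v), q.IsPath → q.length ≤ p.length := by
  classical
  have hne : Nonempty V := hconn.nonempty
  obtain ⟨x⟩ := hne
  set P : ℕ → Prop := fun n => ∃ (u v : V) (q : G.Walk u v), q.IsPath ∧ q.length = n with hP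
  have h0 : P 0 := ⟨x, x, Walk.nil, by simp, rfl⟩
  have hspec : P (Nat.findGreatest P (Fintype.card V)) :=
    Nat.findGreatest_spec (Nat.zero_le _) h0
  obtain ⟨a, b, p, hp, hplen⟩ := hspec
  refine ⟨a, b, p, hp, fun u v q hq => ?_⟩
  by_contra hlt
  push_neg at hlt
  rw [hplen] at hlt
  exact Nat.findGreatest_is_greatest hlt (le_of_lt hq.length_lt) ⟨u, v, q, hq, rfl⟩

lemma second_vertex_unique {G : SimpleGraph V} (hacyc : G.IsAcyclic) {a w b : V}
    (h : G.Adj a w) (q : G.Walk w b) (hp : (Walk.cons h q).IsPath) {z : V}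
    (hz : G.Adj a z) (hzs : z ∈ (Walk.cons h q).support) : z = w := by
  classical
  have hza : z ≠ a := fun hh => G.ne_of_adj hz hh.symm
  have hnil : (Walk.cons hz (Walk.nil : G.Walk z z)).IsPath := by
    simp [G.ne_of_adj hz]
  have heq : (Walk.cons h q).takeUntil z hzs = Walk.cons hz Walk.nil :=
    congrArg Subtype.val
      (hacyc.path_unique ⟨(Walk.cons h q).takeUntil z hzs, hp.takeUntil hzs⟩
        ⟨Walk.cons hz Walk.nil, hnil⟩)
  have hts := (Walk.cons h q).take_spec hzs
  rw [heq] at hts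
  simp only [Walk.cons_append, Walk.nil_append] at hts
  have hsup := congrArg Walk.support hts
  rw [Walk.support_cons, Walk.support_cons,
    ((Walk.cons h q).dropUntil z hzs).support_eq_cons, q.support_eq_cons] at hsup
  have := (List.cons_injective.eq_iff.mp hsup)
  exact (List.cons.injEq _ _ _ _ ▸ this).1

lemma endpoint_leaf {G : SimpleGraph V} (hacyc : G.IsAcyclic) {a w b : V}
    (h : G.Adj a w) (q : G.Walk w b) (hp : (Walk.cons h q).IsPath)
    (hmax : ∀ (u v : V) (r : G.Walk u v), r.IsPath → r.length ≤ (Walk.cons h q).length) :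
    ∀ z, G.Adj a z → z = w := by
  intro z hz
  by_cases hzs : z ∈ (Walk.cons h q).support
  · exact second_vertex_unique hacyc h q hp hz hzs
  · exfalso
    have hp' : (Walk.cons hz.symm (Walk.cons h q)).IsPath := by
      rw [Walk.cons_isPath_iff]
      exact ⟨hp, hzs⟩
    have := hmax _ _ _ hp'
    simp [Walk.length_cons] at this
variable {V : Type*}

/-- The inclusion homomorphism from an induced subgraph. -/
def incl (G : SimpleGraph V) (s : Set V) : G.induce s →g G where
  toFun := Subtype.val
  map_rel' := fun h => h

lemma incl_injective (G : SimpleGraph V) (s : Set V) : Function.Injective (incl G s) :=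
  Subtype.val_injective

/-- Lift a list of walks in an induced subgraph to the ambient graph. -/
def liftC {G : SimpleGraph V} {s : Set V}
    (C : List ((u : ↥s) × (v : ↥s) × (G.induce s).Walk u v)) :
    List ((u : V) × (v : V) × G.Walk u v) :=
  C.map (fun p => ⟨p.1.1, p.2.1.1, p.2.2.map (incl G s)⟩)

variable {G : SimpleGraph V} {s : Set V}
    {C : List ((u : ↥s) × (v : ↥s) × (G.induce s).Walk u v)}

lemma liftC_length : (liftC C).length = C.length := List.length_map _

lemma liftC_isPath (hC : ∀ p ∈ C, p.2.2.IsPath) : ∀ p ∈ liftC C, p.2.2.IsPath := by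
  intro p hp
  obtain ⟨q, hq, rfl⟩ := List.mem_map.mp hp
  exact Walk.map_isPath_of_injective (incl_injective G s) (hC q hq)

lemma liftC_lengths (hC : ∀ p ∈ C, p.2.2.length = 2) :
    ∀ p ∈ liftC C, p.2.2.length = 2 := by
  intro p hp
  obtain ⟨q, hq, rfl⟩ := List.mem_map.mp hp
  exact (Walk.length_map _ _).trans (hC q hq)

lemma liftC_edge_mem_s {p : (u : V) × (v : V) × G.Walk u v} (hp : p ∈ liftC C)
    {e : Sym2 V} (he : e ∈ p.2.2.edges) : ∀ x ∈ e, x ∈ s := by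
  obtain ⟨q, hq, rfl⟩ := List.mem_map.mp hp
  have he2 : e ∈ (q.2.2.map (incl G s)).edges := he
  rw [Walk.edges_map, List.mem_map] at he2
  obtain ⟨e', -, rfl⟩ := he2
  intro x hx
  rw [Sym2.mem_map] at hx
  obtain ⟨y, -, rfl⟩ := hx
  exact y.2

lemma liftC_pairwise
    (hC : C.Pairwise (fun p q => ∀ e, e ∈ p.2.2.edges → e ∉ q.2.2.edges)) :
    (liftC C).Pairwise (fun p q => ∀ e, e ∈ p.2.2.edges → e ∉ q.2.2.edges) := by
  refine List.Pairwise.map _ ?_ hC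
  intro p q hpq e he hq
  have he2 : e ∈ (p.2.2.map (incl G s)).edges := he
  have hq2 : e ∈ (q.2.2.map (incl G s)).edges := hq
  rw [Walk.edges_map, List.mem_map] at he2 hq2
  obtain ⟨e₁, he₁, rfl⟩ := he2
  obtain ⟨e₂, he₂, heq⟩ := hq2
  have : e₂ = e₁ := Sym2.map.injective (incl_injective G s) heq
  exact hpq e₁ he₁ (this ▸ he₂)

lemma liftC_cover (hC : ∀ e, e ∈ (G.induce s).edgeSet ↔ ∃ p ∈ C, e ∈ p.2.2.edges)
    {x y : V} (hxy : G.Adj x y) (hx : x ∈ s) (hy : y ∈ s) :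
    ∃ p ∈ liftC C, s(x, y) ∈ p.2.2.edges := by
  have hadj : (G.induce s).Adj ⟨x, hx⟩ ⟨y, hy⟩ := hxy
  obtain ⟨p, hp, hep⟩ := (hC s(⟨x, hx⟩, ⟨y, hy⟩)).mp hadj
  refine ⟨⟨p.1.1, p.2.1.1, p.2.2.map (incl G s)⟩, List.mem_map.mpr ⟨p, hp, rfl⟩, ?_⟩
  show s(x, y) ∈ (p.2.2.map (incl G s)).edges
  rw [Walk.edges_map]
  exact List.mem_map.mpr ⟨_, hep, rfl⟩

lemma assemble {G : SimpleGraph V} {s : Set V}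
    {C' : List ((u : ↥s) × (v : ↥s) × (G.induce s).Walk u v)}
    (h1 : ∀ p ∈ C', p.2.2.IsPath)
    (h2 : C'.Pairwise (fun p q => ∀ e, e ∈ p.2.2.edges → e ∉ q.2.2.edges))
    (h3 : ∀ e, e ∈ (G.induce s).edgeSet ↔ ∃ p ∈ C', e ∈ p.2.2.edges)
    (new : (u : V) × (v : V) × G.Walk u v)
    (hnp : new.2.2.IsPath)
    (hcov : ∀ x y : V, G.Adj x y → (x ∈ s ∧ y ∈ s) ∨ s(x, y) ∈ new.2.2.edges)
    (hnot : ∀ e ∈ new.2.2.edges, ∃ x ∈ e, x ∉ s) :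
    (∀ p ∈ new :: liftC C', p.2.2.IsPath) ∧
    (new :: liftC C').Pairwise (fun p q => ∀ e, e ∈ p.2.2.edges → e ∉ q.2.2.edges) ∧
    (∀ e, e ∈ G.edgeSet ↔ ∃ p ∈ new :: liftC C', e ∈ p.2.2.edges) := by
  refine ⟨?_, ?_, ?_⟩
  · intro p hp
    rcases List.mem_cons.mp hp with rfl | hp
    · exact hnp
    · exact liftC_isPath h1 p hp
  · rw [List.pairwise_cons]
    refine ⟨?_, liftC_pairwise h2⟩
    intro q hq e he hq'
    obtain ⟨x, hx, hxs⟩ := hnot e he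
    exact hxs (liftC_edge_mem_s hq hq' x hx)
  · intro e
    constructor
    · intro he
      induction e using Sym2.ind with
      | _ x y =>
        rw [SimpleGraph.mem_edgeSet] at he
        rcases hcov x y he with ⟨hx, hy⟩ | h
        · obtain ⟨p, hp, hep⟩ := liftC_cover h3 he hx hy
          exact ⟨p, List.mem_cons.mpr (Or.inr hp), hep⟩
        · exact ⟨new, List.mem_cons_self, h⟩
    · rintro ⟨p, _, hep⟩
      exact p.2.2.edges_subset_edgeSet hep


universe u

theorem odd_decomp : ∀ (n : ℕ) {V : Type u} [Fintype V] (G : SimpleGraph V),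
    G.Connected → G.IsAcyclic → Fintype.card V = n → n % 2 = 1 →
    ∃ C : List ((u : V) × (v : V) × G.Walk u v),
      (∀ p ∈ C, p.2.2.IsPath) ∧
      C.Pairwise (fun p q => ∀ e, e ∈ p.2.2.edges → e ∉ q.2.2.edges) ∧
      (∀ e, e ∈ G.edgeSet ↔ ∃ p ∈ C, e ∈ p.2.2.edges) ∧
      (∀ p ∈ C, p.2.2.length = 2) ∧ C.length = n / 2 := by
  intro n
  induction n using Nat.strong_induction_on with
  | _ n IH =>
    intro V _ G hconn hacyc hcard hodd
    by_cases hn1 : n = 1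
    · refine ⟨[], by simp, by simp, ?_, by simp, by simp [hn1]⟩
      intro e
      simp only [List.not_mem_nil, false_and, exists_false, iff_false]
      intro he
      induction e using Sym2.ind with
      | _ x y =>
        rw [SimpleGraph.mem_edgeSet] at he
        have : x = y := by
          have h1 : Fintype.card V ≤ 1 := by omega
          exact Fintype.card_le_one_iff.mp h1 x y
        exact he.ne this
    · have hn3 : 3 ≤ n := by omega
      obtain ⟨A, B, p, hp, hmax⟩ := exists_max_path hconn
      -- there is a path of length ≥ 1
      have hM1 : 1 ≤ p.length := by
        have hcard2 : 1 < Fintype.card V := by omega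
        obtain ⟨x, y, hxy⟩ := Fintype.exists_pair_of_one_lt_card hcard2
        obtain ⟨w⟩ := hconn x y
        have hq := w.toPath.2
        have : 1 ≤ (w.toPath : G.Walk x y).length := by
          by_contra hc
          push_neg at hc
          have h0 : (w.toPath : G.Walk x y).length = 0 := by omega
          exact hxy (Walk.eq_of_length_eq_zero h0)
        exact le_trans this (hmax _ _ _ hq)
      -- the max path has length ≥ 2
      have hM2 : 2 ≤ p.length := by
        by_contra hc
        push_neg at hc
        have hlen1 : p.length = 1 := by omega
        have hAB : A ≠ B := fun h => by
          subst h
          rw [Walk.isPath_iff_eq_nil] at hp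
          rw [hp] at hlen1
          simp at hlen1
        obtain ⟨W, hAW, r, hr⟩ := p.exists_eq_cons_of_ne hAB
        have hrnil : r.length = 0 := by
          have := congrArg Walk.length hr
          simp [Walk.length_cons] at this
          omega
        have hWB : W = B := Walk.eq_of_length_eq_zero hrnil
        -- a third vertex exists
        have hcard3 : 2 < Fintype.card V := by omega
        have : ∃ c : V, c ≠ A ∧ c ≠ B := by
          by_contra hcon
          push_neg at hcon
          have hsub : (Finset.univ : Finset V) ⊆ {A, B} := by
            intro c _
            simp only [Finset.mem_insert, Finset.mem_singleton]
            by_cases hcA : c = A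
            · exact Or.inl hcA
            · exact Or.inr (hcon c hcA)
          have := Finset.card_le_card hsub
          have h2 : ({A, B} : Finset V).card ≤ 2 := Finset.card_insert_le _ _ |>.trans (by simp)
          rw [Finset.card_univ] at this
          omega
        obtain ⟨c, hcA, hcB⟩ := this
        obtain ⟨w⟩ := hconn c A
        have hq := w.toPath.2
        have hq1 : (w.toPath : G.Walk c A).length = 1 := by
          have hle := hmax _ _ _ hq
          have : 1 ≤ (w.toPath : G.Walk c A).length := by
            by_contra hcc
            push_neg at hcc
            have h0 : (w.toPath : G.Walk c A).length = 0 := by omega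
            exact hcA (Walk.eq_of_length_eq_zero h0)
          omega
        have hadjcA : G.Adj c A := Walk.adj_of_length_eq_one hq1
        have hp' : (Walk.cons hadjcA p).IsPath := by
          rw [Walk.cons_isPath_iff]
          refine ⟨hp, ?_⟩
          rw [hr]
          subst hWB
          have : r = Walk.nil := by
            cases r with
            | nil => rfl
            | cons h r' => simp [Walk.length_cons] at hrnil
          rw [this]
          simp [Walk.support_cons]
          exact ⟨hcA, hcB⟩
        have := hmax _ _ _ hp'
        simp [Walk.length_cons] at this
      -- decompose the max path : p = cons hAW (cons hWX r)
      have hAB : A ≠ B := fun h => by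
        subst h
        rw [Walk.isPath_iff_eq_nil] at hp
        rw [hp] at hM2
        simp at hM2
      obtain ⟨W, hAW, q, rfl⟩ := p.exists_eq_cons_of_ne hAB
      have hWB : W ≠ B := fun h => by
        subst h
        have hq : q.IsPath := hp.of_cons
        rw [Walk.isPath_iff_eq_nil] at hq
        rw [hq] at hM2
        simp at hM2
      obtain ⟨X, hWX, r, rfl⟩ := q.exists_eq_cons_of_ne hWB
      have leafA : ∀ z, G.Adj A z → z = W := endpoint_leaf hacyc hAW _ hp hmax
      have hWleaf : ∀ z, G.Adj W z → z ≠ A → z ≠ X → (∀ y, G.Adj z y → y = W) := by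
        intro z hWz hzA hzX
        have hq : (Walk.cons hWX r).IsPath := hp.of_cons
        have hznotq : z ∉ (Walk.cons hWX r).support := fun hmem =>
          hzX (second_vertex_unique hacyc hWX r hq hWz hmem)
        have hp2 : (Walk.cons hWz.symm (Walk.cons hWX r)).IsPath :=
          (Walk.cons_isPath_iff _ _).mpr ⟨hq, hznotq⟩
        refine endpoint_leaf hacyc hWz.symm (Walk.cons hWX r) hp2 ?_
        intro u v rr hrr
        have := hmax u v rr hrr
        simpa [Walk.length_cons] using this
      have hAnotq : A ∉ (Walk.cons hWX r).support := ((Walk.cons_isPath_iff _ _).mp hp).2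
      by_cases hcase : ∃ z, G.Adj W z ∧ z ≠ A ∧ z ≠ X
      · -- case (a): W has a third neighbor, which is a leaf
        obtain ⟨z, hWz, hzA, hzX⟩ := hcase
        have leafz := hWleaf z hWz hzA hzX
        have hAz : A ≠ z := Ne.symm hzA
        set s : Set V := {x | x ≠ A ∧ x ≠ z} with hs
        have hWs : W ∈ s := ⟨hAW.ne', hWz.ne⟩
        have hcards : Fintype.card ↥s = n - 2 := by
          rw [← hcard]; exact card_ne_two hAz
        have H : ∀ u v : V, u ∈ s → v ∈ s → ∃ pw : G.Walk u v, ∀ x ∈ pw.support, x ∈ s := by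
          intro u v hu hv
          obtain ⟨w⟩ := hconn u v
          refine ⟨(w.toPath : G.Walk u v), ?_⟩
          intro x hx
          have hA : A ∉ (w.toPath : G.Walk u v).support :=
            leaf_avoid leafA w.toPath.2 hu.1 hv.1
          have hz' : z ∉ (w.toPath : G.Walk u v).support :=
            leaf_avoid leafz w.toPath.2 hu.2 hv.2
          exact ⟨fun h => hA (h ▸ hx), fun h => hz' (h ▸ hx)⟩
        have hconn' := induce_connected hconn ⟨W, hWs⟩ H
        have hacyc' := induce_acyclic hacyc s
        obtain ⟨C', hC1, hC2, hC3, hC4, hC5⟩ :=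
          IH (n - 2) (by omega) (G.induce s) hconn' hacyc' hcards (by omega)
        set new : (u : V) × (v : V) × G.Walk u v :=
          ⟨A, z, Walk.cons hAW (Walk.cons hWz Walk.nil)⟩ with hnew
        have hnewp : new.2.2.IsPath := by
          rw [hnew]; simp [Walk.cons_isPath_iff, hAW.ne, hWz.ne, hAz]
        have hedges : new.2.2.edges = [s(A, W), s(W, z)] := by
          rw [hnew]; simp
        have hcov : ∀ x y : V, G.Adj x y → (x ∈ s ∧ y ∈ s) ∨ s(x, y) ∈ new.2.2.edges := by
          intro x y hxy
          rw [hedges]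
          by_cases hxA : x = A
          · subst hxA; right; rw [leafA y hxy]; simp
          · by_cases hyA : y = A
            · subst hyA; right; rw [leafA x hxy.symm]; simp [Sym2.eq_swap]
            · by_cases hxz : x = z
              · subst hxz; right; rw [leafz y hxy]; simp [Sym2.eq_swap]
              · by_cases hyz : y = z
                · subst hyz; right; rw [leafz x hxy.symm]; simp
                · exact Or.inl ⟨⟨hxA, hxz⟩, ⟨hyA, hyz⟩⟩
        have hnot : ∀ e ∈ new.2.2.edges, ∃ x ∈ e, x ∉ s := by
          rw [hedges]
          intro e he
          simp only [List.mem_cons, List.mem_singleton, List.not_mem_nil, or_false] at he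
          rcases he with rfl | rfl
          · exact ⟨A, by simp, fun hh => hh.1 rfl⟩
          · exact ⟨z, by simp, fun hh => hh.2 rfl⟩
        obtain ⟨hD1, hD2, hD3⟩ := assemble hC1 hC2 hC3 new hnewp hcov hnot
        refine ⟨new :: liftC C', hD1, hD2, hD3, ?_, ?_⟩
        · intro pp hpp
          rcases List.mem_cons.mp hpp with rfl | hpp
          · rw [hnew]; simp
          · exact liftC_lengths hC4 pp hpp
        · simp only [List.length_cons, liftC_length, hC5]
          omega
      · -- case (b): W has exactly the neighbors A and X
        push_neg at hcase
        have hWnb : ∀ z, G.Adj W z → z = A ∨ z = X := by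
          intro z hz
          by_cases h1 : z = A
          · exact Or.inl h1
          · exact Or.inr (hcase z hz h1)
        have hXA : X ≠ A := by
          intro h
          apply hAnotq
          rw [← h]
          simp [Walk.support_cons]
        set s : Set V := {x | x ≠ A ∧ x ≠ W} with hs
        have hXs : X ∈ s := ⟨hXA, hWX.ne'⟩
        have hcards : Fintype.card ↥s = n - 2 := by
          rw [← hcard]; exact card_ne_two hAW.ne
        have H : ∀ u v : V, u ∈ s → v ∈ s → ∃ pw : G.Walk u v, ∀ x ∈ pw.support, x ∈ s := by
          intro u v hu hv
          obtain ⟨w⟩ := hconn u v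
          refine ⟨(w.toPath : G.Walk u v), ?_⟩
          have hA : A ∉ (w.toPath : G.Walk u v).support :=
            leaf_avoid leafA w.toPath.2 hu.1 hv.1
          have hW : W ∉ (w.toPath : G.Walk u v).support := by
            intro hmem
            obtain ⟨y₁, y₂, hy₁, hy₂, hne, hm₁, hm₂⟩ :=
              interior_two_neighbors w.toPath.2 hmem (Ne.symm hu.2) (Ne.symm hv.2)
            rcases hWnb y₁ hy₁ with rfl | rfl
            · exact hA hm₁
            · rcases hWnb y₂ hy₂ with rfl | rfl
              · exact hA hm₂
              · exact hne rfl
          intro x hx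
          exact ⟨fun h => hA (h ▸ hx), fun h => hW (h ▸ hx)⟩
        have hconn' := induce_connected hconn ⟨X, hXs⟩ H
        have hacyc' := induce_acyclic hacyc s
        obtain ⟨C', hC1, hC2, hC3, hC4, hC5⟩ :=
          IH (n - 2) (by omega) (G.induce s) hconn' hacyc' hcards (by omega)
        set new : (u : V) × (v : V) × G.Walk u v :=
          ⟨A, X, Walk.cons hAW (Walk.cons hWX Walk.nil)⟩ with hnew
        have hnewp : new.2.2.IsPath := by
          rw [hnew]; simp [Walk.cons_isPath_iff, hAW.ne, hWX.ne, Ne.symm hXA]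
        have hedges : new.2.2.edges = [s(A, W), s(W, X)] := by
          rw [hnew]; simp
        have hcov : ∀ x y : V, G.Adj x y → (x ∈ s ∧ y ∈ s) ∨ s(x, y) ∈ new.2.2.edges := by
          intro x y hxy
          rw [hedges]
          by_cases hxA : x = A
          · subst hxA; right; rw [leafA y hxy]; simp
          · by_cases hyA : y = A
            · subst hyA; right; rw [leafA x hxy.symm]; simp [Sym2.eq_swap]
            · by_cases hxW : x = W
              · subst hxW
                rcases hWnb y hxy with rfl | rfl
                · exact absurd rfl hyA
                · right; simp
              · by_cases hyW : y = W
                · subst hyW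
                  rcases hWnb x hxy.symm with rfl | rfl
                  · exact absurd rfl hxA
                  · right; simp [Sym2.eq_swap]
                · exact Or.inl ⟨⟨hxA, hxW⟩, ⟨hyA, hyW⟩⟩
        have hnot : ∀ e ∈ new.2.2.edges, ∃ x ∈ e, x ∉ s := by
          rw [hedges]
          intro e he
          simp only [List.mem_cons, List.mem_singleton, List.not_mem_nil, or_false] at he
          rcases he with rfl | rfl
          · exact ⟨A, by simp, fun hh => hh.1 rfl⟩
          · exact ⟨W, by simp, fun hh => hh.2 rfl⟩
        obtain ⟨hD1, hD2, hD3⟩ := assemble hC1 hC2 hC3 new hnewp hcov hnot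
        refine ⟨new :: liftC C', hD1, hD2, hD3, ?_, ?_⟩
        · intro pp hpp
          rcases List.mem_cons.mp hpp with rfl | hpp
          · rw [hnew]; simp
          · exact liftC_lengths hC4 pp hpp
        · simp only [List.length_cons, liftC_length, hC5]
          omega

/-- Even case: a tree on `2k` vertices decomposes into `k-1` paths of length 2
and one path of length 1. -/
theorem even_decomp {V : Type u} [Fintype V] (G : SimpleGraph V)
    (hconn : G.Connected) (hacyc : G.IsAcyclic) (k : ℕ) (hk : 1 ≤ k)
    (hcard : Fintype.card V = 2 * k) :
    ∃ C : List ((u : V) × (v : V) × G.Walk u v),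
      (∀ p ∈ C, p.2.2.IsPath) ∧
      C.Pairwise (fun p q => ∀ e, e ∈ p.2.2.edges → e ∉ q.2.2.edges) ∧
      (∀ e, e ∈ G.edgeSet ↔ ∃ p ∈ C, e ∈ p.2.2.edges) ∧
      C.length = k ∧
      C.countP (fun p => p.2.2.length = 2) = k - 1 ∧
      C.countP (fun p => p.2.2.length = 1) = 1 := by
  classical
  obtain ⟨A, B, p, hp, hmax⟩ := exists_max_path hconn
  have hM1 : 1 ≤ p.length := by
    have hcard2 : 1 < Fintype.card V := by omega
    obtain ⟨x, y, hxy⟩ := Fintype.exists_pair_of_one_lt_card hcard2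
    obtain ⟨w⟩ := hconn x y
    have hq := w.toPath.2
    have : 1 ≤ (w.toPath : G.Walk x y).length := by
      by_contra hc
      push_neg at hc
      have h0 : (w.toPath : G.Walk x y).length = 0 := by omega
      exact hxy (Walk.eq_of_length_eq_zero h0)
    exact le_trans this (hmax _ _ _ hq)
  have hAB : A ≠ B := fun h => by
    subst h
    rw [Walk.isPath_iff_eq_nil] at hp
    rw [hp] at hM1
    simp at hM1
  obtain ⟨W, hAW, q, rfl⟩ := p.exists_eq_cons_of_ne hAB
  have leafA : ∀ z, G.Adj A z → z = W := endpoint_leaf hacyc hAW _ hp hmax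
  set s : Set V := {x | x ≠ A} with hs
  have hWs : W ∈ s := hAW.ne'
  have hcards : Fintype.card ↥s = 2 * k - 1 := by
    rw [← hcard]; exact card_ne_one A
  have H : ∀ u v : V, u ∈ s → v ∈ s → ∃ pw : G.Walk u v, ∀ x ∈ pw.support, x ∈ s := by
    intro u v hu hv
    obtain ⟨w⟩ := hconn u v
    refine ⟨(w.toPath : G.Walk u v), ?_⟩
    intro x hx
    have hA : A ∉ (w.toPath : G.Walk u v).support :=
      leaf_avoid leafA w.toPath.2 hu hv
    exact fun h => hA (h ▸ hx)
  have hconn' := induce_connected hconn ⟨W, hWs⟩ H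
  have hacyc' := induce_acyclic hacyc s
  obtain ⟨C', hC1, hC2, hC3, hC4, hC5⟩ :=
    odd_decomp (2 * k - 1) (G.induce s) hconn' hacyc' hcards (by omega)
  set new : (u : V) × (v : V) × G.Walk u v := ⟨A, W, Walk.cons hAW Walk.nil⟩ with hnew
  have hnewp : new.2.2.IsPath := by
    rw [hnew]; simp [Walk.cons_isPath_iff, hAW.ne]
  have hedges : new.2.2.edges = [s(A, W)] := by rw [hnew]; simp
  have hcov : ∀ x y : V, G.Adj x y → (x ∈ s ∧ y ∈ s) ∨ s(x, y) ∈ new.2.2.edges := by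
    intro x y hxy
    rw [hedges]
    by_cases hxA : x = A
    · subst hxA; right; rw [leafA y hxy]; simp
    · by_cases hyA : y = A
      · subst hyA; right; rw [leafA x hxy.symm]; simp [Sym2.eq_swap]
      · exact Or.inl ⟨hxA, hyA⟩
  have hnot : ∀ e ∈ new.2.2.edges, ∃ x ∈ e, x ∉ s := by
    rw [hedges]
    intro e he
    simp only [List.mem_singleton] at he
    subst he
    exact ⟨A, by simp, fun hh => hh rfl⟩
  obtain ⟨hD1, hD2, hD3⟩ := assemble hC1 hC2 hC3 new hnewp hcov hnot
  have hlift2 : ∀ pp ∈ liftC C', pp.2.2.length = 2 := liftC_lengths hC4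
  refine ⟨new :: liftC C', hD1, hD2, hD3, ?_, ?_, ?_⟩
  · simp only [List.length_cons, liftC_length, hC5]
    omega
  · have h2 : (liftC C').countP (fun pp => pp.2.2.length = 2) = (liftC C').length := by
      rw [List.countP_eq_length]
      intro a ha
      simpa using hlift2 a ha
    rw [List.countP_cons, h2, liftC_length, hC5]
    rw [hnew]; simp only [Walk.length_cons, Walk.length_nil]
    norm_num
    omega
  · have h1 : (liftC C').countP (fun pp => pp.2.2.length = 1) = 0 := by
      rw [List.countP_eq_zero]
      intro a ha
      simp [hlift2 a ha]
    rw [List.countP_cons, h1]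
    rw [hnew]; simp only [Walk.length_cons, Walk.length_nil]
    norm_num


/-- Odd case: a tree on `2k-1` vertices decomposes into `k-2` paths of length 2
and two paths of length 1. -/
theorem split_decomp {V : Type u} [Fintype V] (G : SimpleGraph V)
    (hconn : G.Connected) (hacyc : G.IsAcyclic) (k : ℕ) (hk : 2 ≤ k)
    (hcard : Fintype.card V = 2 * k - 1) :
    ∃ C : List ((u : V) × (v : V) × G.Walk u v),
      (∀ p ∈ C, p.2.2.IsPath) ∧
      C.Pairwise (fun p q => ∀ e, e ∈ p.2.2.edges → e ∉ q.2.2.edges) ∧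
      (∀ e, e ∈ G.edgeSet ↔ ∃ p ∈ C, e ∈ p.2.2.edges) ∧
      C.length = k ∧
      C.countP (fun p => p.2.2.length = 2) = k - 2 ∧
      C.countP (fun p => p.2.2.length = 1) = 2 := by
  classical
  obtain ⟨C, hC1, hC2, hC3, hC4, hC5⟩ :=
    odd_decomp (2 * k - 1) G hconn hacyc hcard (by omega)
  have hClen : C.length = k - 1 := by rw [hC5]; omega
  cases C with
  | nil =>
    simp at hClen
    omega
  | cons p₀ C₀ =>
    obtain ⟨u, v, w⟩ := p₀
    have hp₀ : w.IsPath := hC1 _ (List.mem_cons_self)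
    have hl₀ : w.length = 2 := hC4 _ (List.mem_cons_self)
    have huv : u ≠ v := by
      intro h
      subst h
      rw [Walk.isPath_iff_eq_nil] at hp₀
      rw [hp₀] at hl₀
      simp at hl₀
    obtain ⟨m, h₁, r, rfl⟩ := w.exists_eq_cons_of_ne huv
    have hrlen : r.length = 1 := by
      simp [Walk.length_cons] at hl₀
      omega
    have hmv : m ≠ v := by
      intro h
      subst h
      have hnil : r.IsPath := hp₀.of_cons
      rw [Walk.isPath_iff_eq_nil] at hnil
      rw [hnil] at hrlen
      simp at hrlen
    obtain ⟨v', h₂, r', rfl⟩ := r.exists_eq_cons_of_ne hmv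
    have hr'0 : r'.length = 0 := by
      simp only [Walk.length_cons] at hrlen
      omega
    have hv2 : v = v' := (Walk.eq_of_length_eq_zero hr'0).symm
    subst hv2
    have hr'nil : r' = Walk.nil := by
      have hh : r'.IsPath := hp₀.of_cons.of_cons
      rwa [Walk.isPath_iff_eq_nil] at hh
    subst hr'nil
    have hum : u ≠ m := h₁.ne
    have hmv' : m ≠ v := h₂.ne
    have hE : (Walk.cons h₁ (Walk.cons h₂ (Walk.nil : G.Walk v v))).edges
        = [s(u, m), s(m, v)] := by simp
    have hne12 : s(u, m) ≠ s(m, v) := by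
      intro hcontra
      rcases Sym2.eq_iff.mp hcontra with ⟨ha, hb⟩ | ⟨ha, hb⟩
      · exact hum ha
      · exact huv ha
    have hpw := hC2
    rw [List.pairwise_cons] at hpw
    obtain ⟨hhead, htail⟩ := hpw
    have hmemE1 : s(u, m) ∈ (Walk.cons h₁ (Walk.cons h₂ (Walk.nil : G.Walk v v))).edges := by
      rw [hE]; simp
    have hmemE2 : s(m, v) ∈ (Walk.cons h₁ (Walk.cons h₂ (Walk.nil : G.Walk v v))).edges := by
      rw [hE]; simp
    refine ⟨⟨u, m, Walk.cons h₁ Walk.nil⟩ :: ⟨m, v, Walk.cons h₂ Walk.nil⟩ :: C₀,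
      ?_, ?_, ?_, ?_, ?_, ?_⟩
    · intro p hp
      rcases List.mem_cons.mp hp with rfl | hp
      · simp [Walk.cons_isPath_iff, hum]
      · rcases List.mem_cons.mp hp with rfl | hp
        · simp [Walk.cons_isPath_iff, hmv']
        · exact hC1 p (List.mem_cons.mpr (Or.inr hp))
    · refine List.Pairwise.cons ?_ (List.Pairwise.cons ?_ htail)
      · intro qq hqq e he
        simp only [Walk.edges_cons, Walk.edges_nil, List.mem_singleton] at he
        subst he
        rcases List.mem_cons.mp hqq with rfl | hqq
        · simp only [Walk.edges_cons, Walk.edges_nil, List.mem_singleton]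
          exact hne12
        · exact hhead qq hqq _ hmemE1
      · intro qq hqq e he
        simp only [Walk.edges_cons, Walk.edges_nil, List.mem_singleton] at he
        subst he
        exact hhead qq hqq _ hmemE2
    · intro e
      rw [hC3 e]
      constructor
      · rintro ⟨p, hp, hep⟩
        rcases List.mem_cons.mp hp with rfl | hp
        · rw [hE] at hep
          rcases List.mem_cons.mp hep with rfl | hep
          · exact ⟨_, List.mem_cons_self, by simp⟩
          · simp only [List.mem_singleton] at hep
            subst hep
            refine ⟨⟨m, v, Walk.cons h₂ Walk.nil⟩, ?_, by simp⟩
            exact List.mem_cons.mpr (Or.inr (List.mem_cons_self))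
        · exact ⟨p, List.mem_cons.mpr (Or.inr (List.mem_cons.mpr (Or.inr hp))), hep⟩
      · rintro ⟨p, hp, hep⟩
        rcases List.mem_cons.mp hp with rfl | hp
        · simp only [Walk.edges_cons, Walk.edges_nil, List.mem_singleton] at hep
          subst hep
          exact ⟨_, List.mem_cons_self, hmemE1⟩
        · rcases List.mem_cons.mp hp with rfl | hp
          · simp only [Walk.edges_cons, Walk.edges_nil, List.mem_singleton] at hep
            subst hep
            exact ⟨_, List.mem_cons_self, hmemE2⟩
          · exact ⟨p, List.mem_cons.mpr (Or.inr hp), hep⟩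
    · simp only [List.length_cons] at hClen ⊢
      omega
    · have htail2 : C₀.countP (fun pp => pp.2.2.length = 2) = C₀.length := by
        rw [List.countP_eq_length]
        intro a ha
        simpa using hC4 a (List.mem_cons.mpr (Or.inr ha))
      rw [List.countP_cons, List.countP_cons, htail2]
      simp only [Walk.length_cons, Walk.length_nil]
      norm_num
      simp only [List.length_cons] at hClen
      omega
    · have htail1 : C₀.countP (fun pp => pp.2.2.length = 1) = 0 := by
        rw [List.countP_eq_zero]
        intro a ha
        simp [hC4 a (List.mem_cons.mpr (Or.inr ha))]
      rw [List.countP_cons, List.countP_cons, htail1]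
      simp

end BPDAux

/-- Basic Path Decomposition of a tree: if a finite tree `T` has `n = 2k`
vertices (`k ≥ 1`), its edge set decomposes into `k - 1` edge-disjoint paths of
length two together with one path of length one; if `T` has `n = 2k - 1`
vertices (`k ≥ 2`), its edge set decomposes into `k - 2` edge-disjoint paths of
length two together with two paths of length one. -/
theorem tree_basic_path_decomposition
    {V : Type*} [Fintype V] (T : SimpleGraph V)
    (hConn : T.Connected) (hAcyclic : T.IsAcyclic) (k : ℕ) :
    (1 ≤ k → Fintype.card V = 2 * k →
      ∃ C : List ((u : V) × (v : V) × T.Walk u v),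
        IsPathDecomposition T C ∧ C.length = k ∧
        C.countP (fun p => p.2.2.length = 2) = k - 1 ∧
        C.countP (fun p => p.2.2.length = 1) = 1) ∧
    (2 ≤ k → Fintype.card V = 2 * k - 1 →
      ∃ C : List ((u : V) × (v : V) × T.Walk u v),
        IsPathDecomposition T C ∧ C.length = k ∧
        C.countP (fun p => p.2.2.length = 2) = k - 2 ∧
        C.countP (fun p => p.2.2.length = 1) = 2) := by
  constructor
  · intro hk hcard
    obtain ⟨C, h1, h2, h3, h4, h5, h6⟩ := BPDAux.even_decomp T hConn hAcyclic k hk hcard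
    exact ⟨C, ⟨h1, h2, h3⟩, h4, h5, h6⟩
  · intro hk hcard
    obtain ⟨C, h1, h2, h3, h4, h5, h6⟩ := BPDAux.split_decomp T hConn hAcyclic k hk hcard
    exact ⟨C, ⟨h1, h2, h3⟩, h4, h5, h6⟩
end

section
/- For every n ≥ 1, the edge set of the complete graph K_{2n} on 2n vertices can be decomposed into exactly n edge-disjoint Hamiltonian paths (paths visiting every vertex of K_{2n}). -/
open SimpleGraph

namespace HamDecomp

variable {V : Type*}

/-- Build a walk (sigma-packaged with its final vertex) from a chain of adjacent
vertices. -/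
def mkW (G : SimpleGraph V) : (a : V) → (l : List V) → List.Chain G.Adj a l → (v : V) × G.Walk a v
  | a, [], _ => ⟨a, SimpleGraph.Walk.nil⟩
  | _, b :: l, h =>
    ⟨(mkW G b l (List.chain_cons.mp h).2).1,
      SimpleGraph.Walk.cons (List.chain_cons.mp h).1 (mkW G b l (List.chain_cons.mp h).2).2⟩

theorem mkW_support (G : SimpleGraph V) : ∀ (a : V) (l : List V) (h : List.Chain G.Adj a l),
    (mkW G a l h).2.support = a :: l
  | _, [], _ => rfl
  | a, b :: l, h => by
    rw [mkW]
    simp [Walk.support_cons, mkW_support G b l (List.chain_cons.mp h).2]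

theorem mkW_edges (G : SimpleGraph V) : ∀ (a : V) (l : List V) (h : List.Chain G.Adj a l),
    (mkW G a l h).2.edges = List.zipWith (fun x y => s(x, y)) (a :: l) l
  | _, [], _ => rfl
  | a, b :: l, h => by
    rw [mkW]
    simp [Walk.edges_cons, mkW_edges G b l (List.chain_cons.mp h).2]

theorem zipWith_cons_range {α β : Type*} (g : α → α → β) :
    ∀ (m : ℕ) (f : ℕ → α),
      List.zipWith g (f 0 :: (List.range m).map (fun j => f (j + 1)))
          ((List.range m).map (fun j => f (j + 1)))
        = (List.range m).map (fun j => g (f j) (f (j + 1)))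
  | 0, _ => rfl
  | m + 1, f => by
    rw [List.range_succ_eq_map]
    simp only [List.map_cons, List.map_map, List.zipWith_cons_cons]
    have := zipWith_cons_range g m (fun j => f (j + 1))
    rw [show ((fun j => f (j + 1)) ∘ Nat.succ) = (fun j => f (j + 1 + 1)) from rfl]
    rw [show ((fun j => g (f j) (f (j + 1))) ∘ Nat.succ)
        = (fun j => g (f (j + 1)) (f (j + 1 + 1))) from rfl]
    rw [← this]

theorem map_range_eq_cons {α : Type*} (f : ℕ → α) (m : ℕ) (hm : 1 ≤ m) :
    (List.range m).map f = f 0 :: (List.range (m - 1)).map (fun j => f (j + 1)) := by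
  obtain ⟨m', rfl⟩ : ∃ m', m = m' + 1 := ⟨m - 1, by omega⟩
  rw [List.range_succ_eq_map]
  simp [List.map_map, Function.comp_def]

theorem mem_of_nodup_length {α : Type*} [Fintype α] [DecidableEq α] {l : List α}
    (h : l.Nodup) (hl : l.length = Fintype.card α) (w : α) : w ∈ l := by
  have huniv : l.toFinset = Finset.univ :=
    Finset.eq_univ_of_card _ (by rw [List.toFinset_card_of_nodup h, hl])
  have : w ∈ l.toFinset := by rw [huniv]; exact Finset.mem_univ w
  exact List.mem_toFinset.mp this

/-- the zigzag offsets 0, 1, -1, 2, -2, ... -/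
def zig (n j : ℕ) : ZMod (2 * n) :=
  if j % 2 = 0 then -((j / 2 : ℕ) : ZMod (2 * n)) else ((j / 2 + 1 : ℕ) : ZMod (2 * n))

/-- vertex `j` of the `i`-th zigzag Hamiltonian path. -/
def sig (n i j : ℕ) : ZMod (2 * n) := (i : ZMod (2 * n)) + zig n j

theorem sig_even (n i k : ℕ) :
    sig n i (2 * k) = (i : ZMod (2 * n)) - ((k : ℕ) : ZMod (2 * n)) := by
  unfold sig zig
  simp [Nat.mul_mod_right, Nat.mul_div_cancel_left _ (by norm_num : 0 < 2), sub_eq_add_neg]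

theorem sig_odd (n i k : ℕ) :
    sig n i (2 * k + 1) = (i : ZMod (2 * n)) + ((k + 1 : ℕ) : ZMod (2 * n)) := by
  unfold sig zig
  have h1 : (2 * k + 1) % 2 = 1 := by omega
  have h2 : (2 * k + 1) / 2 = k := by omega
  rw [h1, h2]
  norm_num

theorem val_zig (n j : ℕ) (hn : 1 ≤ n) (hj : j < 2 * n) :
    (zig n j).val = if j % 2 = 0 then (if j = 0 then 0 else 2 * n - j / 2) else j / 2 + 1 := by
  haveI : NeZero (2 * n) := ⟨by omega⟩
  unfold zig
  split_ifs with h h0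
  · subst h0; simp
  · rw [ZMod.neg_val, ZMod.val_natCast_of_lt (by omega)]
    have : ((j / 2 : ℕ) : ZMod (2 * n)) ≠ 0 := by
      intro hc
      have := congrArg ZMod.val hc
      rw [ZMod.val_natCast_of_lt (by omega), ZMod.val_zero] at this
      omega
    simp [this]
  · rw [ZMod.val_natCast_of_lt (by omega)]

theorem zig_inj (n : ℕ) (hn : 1 ≤ n) {j₁ j₂ : ℕ} (h₁ : j₁ < 2 * n) (h₂ : j₂ < 2 * n)
    (h : zig n j₁ = zig n j₂) : j₁ = j₂ := by
  have hv := congrArg ZMod.val h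
  rw [val_zig n j₁ hn h₁, val_zig n j₂ hn h₂] at hv
  split_ifs at hv <;> omega

theorem sig_inj (n : ℕ) (hn : 1 ≤ n) (i : ℕ) {j₁ j₂ : ℕ} (h₁ : j₁ < 2 * n) (h₂ : j₂ < 2 * n)
    (h : sig n i j₁ = sig n i j₂) : j₁ = j₂ := by
  unfold sig at h
  exact zig_inj n hn h₁ h₂ (add_left_cancel h)

def tailL (n i : ℕ) : List (ZMod (2 * n)) := (List.range (2 * n - 1)).map (fun j => sig n i (j + 1))

theorem cons_tailL (n i : ℕ) (hn : 1 ≤ n) :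
    sig n i 0 :: tailL n i = (List.range (2 * n)).map (sig n i) := by
  rw [map_range_eq_cons (sig n i) (2 * n) (by omega)]
  rfl

theorem nodupL (n i : ℕ) (hn : 1 ≤ n) : ((List.range (2 * n)).map (sig n i)).Nodup :=
  List.Nodup.map_on
    (fun _ hx _ hy h => sig_inj n hn i (List.mem_range.mp hx) (List.mem_range.mp hy) h)
    List.nodup_range

theorem chainL (n i : ℕ) (hn : 1 ≤ n) :
    List.Chain (completeGraph (ZMod (2 * n))).Adj (sig n i 0) (tailL n i) := by
  have pw : List.Pairwise Ne (sig n i 0 :: tailL n i) := by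
    rw [cons_tailL n i hn]; exact nodupL n i hn
  exact pw.isChain

theorem even_core (n : ℕ) (hn : 1 ≤ n) (i : ℕ) (c d : ZMod (2 * n))
    (hsum : c + d = ((2 * i : ℕ) : ZMod (2 * n)))
    (h1 : 1 ≤ (c - ((i : ℕ) : ZMod (2 * n))).val)
    (h2 : (c - ((i : ℕ) : ZMod (2 * n))).val ≤ n - 1) :
    ∃ j < 2 * n - 1, s(c, d) = s(sig n i j, sig n i (j + 1)) := by
  haveI : NeZero (2 * n) := ⟨by omega⟩
  set m : ZMod (2 * n) := c - ((i : ℕ) : ZMod (2 * n)) with hm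
  clear_value m
  refine ⟨2 * (m.val - 1) + 1, by omega, ?_⟩
  have e1 : sig n i (2 * (m.val - 1) + 1) = c := by
    rw [sig_odd, show m.val - 1 + 1 = m.val by omega, ZMod.natCast_zmod_val]
    linear_combination hm
  have e2 : sig n i (2 * (m.val - 1) + 1 + 1) = d := by
    rw [show 2 * (m.val - 1) + 1 + 1 = 2 * ((m.val - 1) + 1) by ring, sig_even,
      show m.val - 1 + 1 = m.val by omega, ZMod.natCast_zmod_val]
    push_cast at hsum ⊢
    linear_combination -hsum - hm
  rw [e1, e2]

theorem odd_core (n : ℕ) (hn : 1 ≤ n) (i : ℕ) (k : ℕ) (hk : k ≤ n - 1) (c d : ZMod (2 * n))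
    (hc : c = ((i : ℕ) : ZMod (2 * n)) - ((k : ℕ) : ZMod (2 * n)))
    (hd : d = ((i : ℕ) : ZMod (2 * n)) + ((k + 1 : ℕ) : ZMod (2 * n))) :
    ∃ j < 2 * n - 1, s(c, d) = s(sig n i j, sig n i (j + 1)) :=
  ⟨2 * k, by omega, by rw [sig_even, sig_odd, hc, hd]⟩

theorem coverage (n : ℕ) (hn : 1 ≤ n) (a b : ZMod (2 * n)) (hab : a ≠ b) :
    ∃ i < n, ∃ j < 2 * n - 1, s(a, b) = s(sig n i j, sig n i (j + 1)) := by
  haveI : NeZero (2 * n) := ⟨by omega⟩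
  have hsv : (a + b).val < 2 * n := ZMod.val_lt (a + b)
  by_cases hpar : (a + b).val % 2 = 0
  · -- even sum: use an odd step
    obtain ⟨i, hi, h2i⟩ : ∃ i, i < n ∧ 2 * i = (a + b).val :=
      ⟨(a + b).val / 2, by omega, by omega⟩
    have hsum : a + b = ((2 * i : ℕ) : ZMod (2 * n)) := by
      rw [h2i, ZMod.natCast_zmod_val]
    set m : ZMod (2 * n) := a - ((i : ℕ) : ZMod (2 * n)) with hm
    clear_value m
    have hbm : b - ((i : ℕ) : ZMod (2 * n)) = -m := by
      push_cast at hsum ⊢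
      linear_combination hsum + hm
    have hm0 : m ≠ 0 := by
      intro h
      apply hab
      have h1 : a = ((i : ℕ) : ZMod (2 * n)) := by
        rw [← sub_eq_zero, ← hm, h]
      have h2 : b = ((i : ℕ) : ZMod (2 * n)) := by
        rw [← sub_eq_zero, hbm, h, neg_zero]
      rw [h1, h2]
    have hmvne : m.val ≠ 0 := by
      intro h
      exact hm0 (by rw [← ZMod.natCast_zmod_val m, h, Nat.cast_zero])
    have hmvn : m.val ≠ n := by
      intro hv
      apply hab
      have hmeq : m = ((n : ℕ) : ZMod (2 * n)) := by rw [← ZMod.natCast_zmod_val m, hv]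
      have h2 : m + m = 0 := by
        rw [hmeq, ← Nat.cast_add, show n + n = 2 * n by ring, ZMod.natCast_self]
      have hmm : -m = m := by rw [neg_eq_iff_add_eq_zero, h2]
      have h3 : a - ((i : ℕ) : ZMod (2 * n)) = b - ((i : ℕ) : ZMod (2 * n)) := by
        rw [hbm, hmm, ← hm]
      exact sub_left_inj.mp h3
    have hmlt : m.val < 2 * n := ZMod.val_lt m
    by_cases hsmall : m.val ≤ n - 1
    · have hx1 : 1 ≤ (a - ((i : ℕ) : ZMod (2 * n))).val := by rw [← hm]; omega
      have hx2 : (a - ((i : ℕ) : ZMod (2 * n))).val ≤ n - 1 := by rw [← hm]; omega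
      exact ⟨i, hi, even_core n hn i a b hsum hx1 hx2⟩
    · have hneg : (-m).val = 2 * n - m.val := by rw [ZMod.neg_val, if_neg hm0]
      have h1 : 1 ≤ (b - ((i : ℕ) : ZMod (2 * n))).val := by rw [hbm, hneg]; omega
      have h2 : (b - ((i : ℕ) : ZMod (2 * n))).val ≤ n - 1 := by rw [hbm, hneg]; omega
      obtain ⟨j, hj, he⟩ := even_core n hn i b a (by rw [add_comm]; exact hsum) h1 h2
      exact ⟨i, hi, j, hj, by rw [Sym2.eq_swap]; exact he⟩
  · -- odd sum: use an even step
    obtain ⟨i, hi, h2i⟩ : ∃ i, i < n ∧ 2 * i + 1 = (a + b).val :=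
      ⟨(a + b).val / 2, by omega, by omega⟩
    have hsum : a + b = ((2 * i + 1 : ℕ) : ZMod (2 * n)) := by
      rw [h2i, ZMod.natCast_zmod_val]
    push_cast at hsum
    set m : ZMod (2 * n) := a - ((i : ℕ) : ZMod (2 * n)) with hm
    clear_value m
    have hmeq : m = ((m.val : ℕ) : ZMod (2 * n)) := (ZMod.natCast_zmod_val m).symm
    have hmlt : m.val < 2 * n := ZMod.val_lt m
    by_cases h0 : m.val = 0
    · have hz : m = 0 := by rw [hmeq, h0, Nat.cast_zero]
      refine ⟨i, hi, odd_core n hn i 0 (by omega) a b ?_ ?_⟩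
      · rw [Nat.cast_zero, sub_zero]
        linear_combination hz - hm
      · rw [show (0 : ℕ) + 1 = 1 from rfl, Nat.cast_one]
        linear_combination hsum + hm - hz
    · by_cases hsm : m.val ≤ n
      · -- edge is s(b, a) with k = m.val - 1
        have hk1 : ((m.val - 1 : ℕ) : ZMod (2 * n)) = m - 1 := by
          rw [Nat.cast_sub (by omega), Nat.cast_one, ← hmeq]
        have hk2 : ((m.val - 1 + 1 : ℕ) : ZMod (2 * n)) = m := by
          rw [show m.val - 1 + 1 = m.val by omega, ← hmeq]
        obtain ⟨j, hj, he⟩ := odd_core n hn i (m.val - 1) (by omega) b a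
          (by rw [hk1]; linear_combination hsum + hm)
          (by rw [hk2]; linear_combination -hm)
        exact ⟨i, hi, j, hj, by rw [Sym2.eq_swap]; exact he⟩
      · -- edge is s(a, b) with k = 2n - m.val
        have hm0 : m ≠ 0 := by
          intro h; apply h0; rw [h, ZMod.val_zero]
        have hneg : (-m).val = 2 * n - m.val := by rw [ZMod.neg_val, if_neg hm0]
        have hnegeq : ((2 * n - m.val : ℕ) : ZMod (2 * n)) = -m := by
          rw [← hneg, ZMod.natCast_zmod_val]
        have hk2 : ((2 * n - m.val + 1 : ℕ) : ZMod (2 * n)) = 1 - m := by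
          rw [Nat.cast_add, Nat.cast_one, hnegeq]; ring
        refine ⟨i, hi, odd_core n hn i (2 * n - m.val) (by omega) a b ?_ ?_⟩
        · rw [hnegeq]; linear_combination -hm
        · rw [hk2]; linear_combination hsum + hm

/-- the `i`-th Hamiltonian path of `K_{2n}` on `ZMod (2n)`. -/
def pathS (n i : ℕ) (hn : 1 ≤ n) :
    (u : ZMod (2 * n)) × (v : ZMod (2 * n)) × (completeGraph (ZMod (2 * n))).Walk u v :=
  ⟨sig n i 0, mkW (completeGraph (ZMod (2 * n))) (sig n i 0) (tailL n i) (chainL n i hn)⟩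

theorem pathS_support (n i : ℕ) (hn : 1 ≤ n) :
    (pathS n i hn).2.2.support = (List.range (2 * n)).map (sig n i) := by
  show (mkW _ (sig n i 0) _ _).2.support = _
  rw [mkW_support]
  exact cons_tailL n i hn

theorem pathS_edges (n i : ℕ) (hn : 1 ≤ n) :
    (pathS n i hn).2.2.edges
      = (List.range (2 * n - 1)).map (fun j => s(sig n i j, sig n i (j + 1))) := by
  show (mkW _ (sig n i 0) _ _).2.edges = _
  rw [mkW_edges]
  exact zipWith_cons_range _ (2 * n - 1) (sig n i)

end HamDecomp

open HamDecomp in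
theorem zmod_decomp (n : ℕ) (hn : 1 ≤ n) :
    ∃ C : List ((u : ZMod (2 * n)) × (v : ZMod (2 * n)) ×
        (completeGraph (ZMod (2 * n))).Walk u v),
      IsPathDecomposition (completeGraph (ZMod (2 * n))) C ∧ C.length = n ∧
      ∀ p ∈ C, ∀ w : ZMod (2 * n), w ∈ p.2.2.support := by
  classical
  haveI : NeZero (2 * n) := ⟨by omega⟩
  set C₀ := (List.range n).map (fun i => pathS n i hn) with hC
  have hcover : ∀ e ∈ (completeGraph (ZMod (2 * n))).edgeSet, ∃ p ∈ C₀, e ∈ p.2.2.edges := by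
    intro e he
    induction e with
    | _ a b =>
      have hab : a ≠ b := he
      obtain ⟨i, hi, j, hj, hedge⟩ := coverage n hn a b hab
      refine ⟨pathS n i hn, List.mem_map.mpr ⟨i, List.mem_range.mpr hi, rfl⟩, ?_⟩
      rw [pathS_edges n i hn, hedge]
      exact List.mem_map.mpr ⟨j, List.mem_range.mpr hj, rfl⟩
  refine ⟨C₀, ⟨?_, ?_, ?_⟩, by simp [hC], ?_⟩
  · -- all paths
    intro p hp
    obtain ⟨i, _, rfl⟩ := List.mem_map.mp hp
    rw [Walk.isPath_def, pathS_support n i hn]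
    exact nodupL n i hn
  · -- pairwise edge-disjoint, via counting
    set E : Finset (Sym2 (ZMod (2 * n))) := Finset.univ.filter (fun e => ¬ e.IsDiag) with hE
    have hEcard : E.card = n * (2 * n - 1) := by
      rw [hE, ← Fintype.card_subtype, Sym2.card_subtype_not_diag, ZMod.card,
        Nat.choose_two_right, show 2 * n * (2 * n - 1) = 2 * (n * (2 * n - 1)) by ring]
      exact Nat.mul_div_cancel_left _ (by norm_num)
    set Fl := (C₀.map (fun p => p.2.2.edges)).flatten with hFl
    have hmem_edgeSet_of_E : ∀ e ∈ E, e ∈ (completeGraph (ZMod (2 * n))).edgeSet := by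
      intro e he
      have hnd : ¬ e.IsDiag := (Finset.mem_filter.mp he).2
      rw [completeGraph_eq_top, edgeSet_top]
      exact hnd
    have hlen : Fl.length = n * (2 * n - 1) := by
      rw [hFl, List.length_flatten, hC, List.map_map, List.map_map]
      simp only [Function.comp_def]
      have hcongr : (List.range n).map (fun i => ((pathS n i hn).2.2.edges).length)
          = List.replicate n (2 * n - 1) := by
        apply List.eq_replicate_iff.mpr
        constructor
        · simp
        · intro b hb
          obtain ⟨i, hi, rfl⟩ := List.mem_map.mp hb
          simp [pathS_edges n i hn]
      rw [hcongr, List.sum_const_nat]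
    have hsub : ∀ e ∈ Fl, e ∈ E := by
      intro e he
      obtain ⟨l, hl, hel⟩ := List.mem_flatten.mp he
      obtain ⟨p, _, rfl⟩ := List.mem_map.mp hl
      have hv := p.2.2.edges_subset_edgeSet hel
      exact Finset.mem_filter.mpr ⟨Finset.mem_univ _,
        (completeGraph (ZMod (2 * n))).not_isDiag_of_mem_edgeSet hv⟩
    have hcovE : ∀ e ∈ E, e ∈ Fl := by
      intro e he
      obtain ⟨p, hp, hep⟩ := hcover e (hmem_edgeSet_of_E e he)
      exact List.mem_flatten.mpr ⟨p.2.2.edges, List.mem_map_of_mem hp, hep⟩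
    have htf : Fl.toFinset = E :=
      Finset.Subset.antisymm (fun e he => hsub e (List.mem_toFinset.mp he))
        (fun e he => List.mem_toFinset.mpr (hcovE e he))
    have hnodup : Fl.Nodup := by
      have hcard : Fl.toFinset.card = Fl.length := by rw [htf, hEcard, hlen]
      exact Multiset.coe_nodup.mp
        (Multiset.toFinset_card_eq_card_iff_nodup.mp (by simpa using hcard))
    have hpd := (List.nodup_flatten.mp hnodup).2
    have hpw := List.pairwise_map.mp hpd
    exact hpw.imp (fun h e he1 he2 => h he1 he2)
  · -- edges are exactly the edge set
    intro e
    constructor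
    · exact fun he => hcover e he
    · rintro ⟨p, _, he⟩
      exact p.2.2.edges_subset_edgeSet he
  · -- Hamiltonicity
    intro p hp w
    obtain ⟨i, _, rfl⟩ := List.mem_map.mp hp
    rw [pathS_support n i hn]
    exact mem_of_nodup_length (nodupL n i hn) (by simp [ZMod.card]) w

/-- For every `n ≥ 1` the edge set of the complete graph `K_{2n}` can be
decomposed into exactly `n` edge-disjoint Hamiltonian paths (paths passing
through every vertex). -/
theorem completeGraph_hamiltonian_path_decomposition (n : ℕ) (hn : 1 ≤ n) :
    ∃ C : List ((u : Fin (2 * n)) × (v : Fin (2 * n)) ×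
        (completeGraph (Fin (2 * n))).Walk u v),
      IsPathDecomposition (completeGraph (Fin (2 * n))) C ∧ C.length = n ∧
      ∀ p ∈ C, ∀ w : Fin (2 * n), w ∈ p.2.2.support := by
  haveI : NeZero (2 * n) := ⟨by omega⟩
  obtain ⟨C₀, ⟨hpath, hpw, hcov⟩, hlen, hham⟩ := zmod_decomp n hn
  let φ : ZMod (2 * n) ≃ Fin (2 * n) :=
    { toFun := fun z => ⟨z.val, ZMod.val_lt z⟩
      invFun := fun f => ((f : ℕ) : ZMod (2 * n))
      left_inv := fun z => ZMod.natCast_zmod_val z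
      right_inv := fun f => by
        ext
        exact ZMod.val_natCast_of_lt f.isLt }
  let F : completeGraph (ZMod (2 * n)) →g completeGraph (Fin (2 * n)) :=
    { toFun := φ
      map_rel' := fun h hc => h (φ.injective hc) }
  have hFφ : ∀ x, F x = φ x := fun _ => rfl
  have hFinj : Function.Injective F := fun a b h => φ.injective h
  refine ⟨C₀.map (fun p => ⟨F p.1, F p.2.1, p.2.2.map F⟩), ⟨?_, ?_, ?_⟩,
    by simpa using hlen, ?_⟩
  · intro p hp
    obtain ⟨q, hq, rfl⟩ := List.mem_map.mp hp
    exact Walk.map_isPath_of_injective hFinj (hpath q hq)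
  · refine List.Pairwise.map _ ?_ hpw
    intro p q hd e he1 he2
    rw [Walk.edges_map] at he1 he2
    obtain ⟨e1, he1', rfl⟩ := List.mem_map.mp he1
    obtain ⟨e2, he2', heq⟩ := List.mem_map.mp he2
    have he12 : e2 = e1 := Sym2.map.injective hFinj heq
    exact hd e1 he1' (he12 ▸ he2')
  · intro e
    constructor
    · intro he
      induction e with
      | _ a b =>
        have hab : a ≠ b := he
        have hab' : φ.symm a ≠ φ.symm b := fun h => hab (by
          rw [← φ.apply_symm_apply a, ← φ.apply_symm_apply b, h])
        obtain ⟨p, hp, hep⟩ := (hcov s(φ.symm a, φ.symm b)).mp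
          ((SimpleGraph.mem_edgeSet _).mpr hab')
        refine ⟨⟨F p.1, F p.2.1, p.2.2.map F⟩, List.mem_map.mpr ⟨p, hp, rfl⟩, ?_⟩
        rw [Walk.edges_map]
        refine List.mem_map.mpr ⟨_, hep, ?_⟩
        rw [Sym2.map_pair_eq]
        have h1 : F (φ.symm a) = a := φ.apply_symm_apply a
        have h2 : F (φ.symm b) = b := φ.apply_symm_apply b
        rw [h1, h2]
    · rintro ⟨p, hp, he⟩
      obtain ⟨q, hq, rfl⟩ := List.mem_map.mp hp
      rw [Walk.edges_map] at he
      obtain ⟨e0, he0, rfl⟩ := List.mem_map.mp he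
      exact F.map_mem_edgeSet (q.2.2.edges_subset_edgeSet he0)
  · intro p hp w
    obtain ⟨q, hq, rfl⟩ := List.mem_map.mp hp
    rw [Walk.support_map]
    exact List.mem_map.mpr ⟨φ.symm w, hham q hq _, φ.apply_symm_apply w⟩
end
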